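/- arXiv:1605.07647 — 10 statements merged into one kernel-verified Lean document; each statement's English description precedes it below -/
import Mathlib

section
/- Fix j ≥ 2 and positive parameters. Suppose R_0 > 1. Then there exists exactly one tuple (S, I_1, …, I_j, R, S̃, Ĩ) of real numbers with I_1 > 0 satisfying all of the equilibrium equations. Moreover, if R_0 < 1, then no tuple with I_1 > 0 satisfies all of the equilibrium equations. -/
/-!
The transfer equations force `I_k = c_0 ⋯ c_{k-1} I_1`, so the infected hosts total `ξ I_1` and
`R` is a multiple of `I_1`. With `a = f c_v / S̄`, `b = f c ξ / S̄` and `B = α_1 + μ_1`, what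
remains is a host–vector system in `x = I_1` in which `S` and `Ĩ` are explicit functions of `x`;
eliminating them leaves, for `x ≠ 0`, the linear equation
`x · B b (a S̄_v + μ_s) = μ_s (a b S̄_v S̄ - B μ̃)`, whose right-hand side has the sign of
`R_0² - 1 = a b S̄_v S̄ / (B μ̃) - 1`.
-/

open Finset

/-- The coefficients `c_0 = 1`, `c_k = α_k/(α_{k+1}+μ_{k+1})` for `1 ≤ k ≤ j−2`, and
`c_{j−1} = α_{j−1}/(γ+μ_j)` of the relapsing host–vector model. -/
noncomputable def ccoef (j : ℕ) (γ : ℝ) (α μ : ℕ → ℝ) : ℕ → ℝ := fun k =>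
  if k = 0 then 1
  else if k = j - 1 then α (j - 1) / (γ + μ j)
  else α k / (α (k + 1) + μ (k + 1))

/-- `ξ = Σ_{k=1}^{j} c_0·c_1⋯c_{k−1}`. -/
noncomputable def xiSum (j : ℕ) (γ : ℝ) (α μ : ℕ → ℝ) : ℝ :=
  ∑ k ∈ Icc 1 j, ∏ l ∈ range k, ccoef j γ α μ l

/-- The equilibrium equations of the single host–vector relapsing disease model with
`j` infected compartments, restricted to constant populations `N = S̄`, `Ñ = S̄_v`. -/
def IsEquilib (j : ℕ) (f c cv γ Sb Sbv μs μr μts μt : ℝ) (α μ : ℕ → ℝ)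
    (S R St It : ℝ) (I : ℕ → ℝ) : Prop :=
  μs * (Sb - S) = f * cv * It * S / Sb ∧
  f * cv * It * S / Sb = (α 1 + μ 1) * I 1 ∧
  (∀ k, 2 ≤ k → k ≤ j - 1 → α (k - 1) * I (k - 1) = (α k + μ k) * I k) ∧
  α (j - 1) * I (j - 1) = (γ + μ j) * I j ∧
  γ * I j = μr * R ∧
  μts * (Sbv - St) = f * c * St / Sb * ∑ k ∈ Icc 1 j, I k ∧
  f * c * St / Sb * ∑ k ∈ Icc 1 j, I k = μt * It ∧
  It = Sbv - St

section ProductRecurrence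

variable {M : Type*} [CommMonoid M]

theorem succ_eq_mul_iff_eq_prod_range_mul {j : ℕ} {c I : ℕ → M} (hc : c 0 = 1) :
    (∀ n, 1 ≤ n → n < j → I (n + 1) = c n * I n) ↔
      ∀ k ∈ Icc 1 j, I k = (∏ l ∈ range k, c l) * I 1 := by
  constructor
  · intro h k hk
    obtain ⟨hk1, hkj⟩ := mem_Icc.mp hk
    induction k, hk1 using Nat.le_induction with
    | base => simp [hc]
    | succ n hn ih =>
      rw [h n hn (by omega), ih (mem_Icc.mpr ⟨hn, by omega⟩) (by omega), prod_range_succ,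
        mul_comm _ (c n), mul_assoc]
  · intro h n hn hnj
    rw [h (n + 1) (mem_Icc.mpr ⟨by omega, hnj⟩), h n (mem_Icc.mpr ⟨hn, hnj.le⟩),
      prod_range_succ, mul_comm _ (c n), mul_assoc]

end ProductRecurrence

section HostVector

/-- The equilibrium equations left once the infected stages are expressed through `x = I_1`:
`a`, `b` are the host and vector infection rates, `B` the exit rate from the first stage,
`m`, `n` the host and vector death rates and `N`, `Nv` the population sizes. -/
def IsHostVectorEquilib (a b B m n N Nv x S St It : ℝ) : Prop :=
  m * (N - S) = B * x ∧ a * It * S = B * x ∧ b * St * x = n * It ∧ It = Nv - St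

variable {a b B m n N Nv x S St It : ℝ}

namespace IsHostVectorEquilib

theorem S_eq (h : IsHostVectorEquilib a b B m n N Nv x S St It) (hm : m ≠ 0) :
    S = N - B * x / m := by
  field_simp
  linear_combination -h.1

theorem It_eq (h : IsHostVectorEquilib a b B m n N Nv x S St It) (hden : n + b * x ≠ 0) :
    It = b * Nv * x / (n + b * x) := by
  obtain ⟨-, -, hvec, hIt⟩ := h
  rw [eq_div_iff hden]
  linear_combination b * x * hIt - hvec

theorem x_mul_eq (h : IsHostVectorEquilib a b B m n N Nv x S St It) (hx : x ≠ 0) :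
    x * (B * b * (a * Nv + m)) = m * (a * b * Nv * N - B * n) := by
  obtain ⟨hS, hhost, hvec, hIt⟩ := h
  refine mul_left_cancel₀ hx ?_
  linear_combination -m * (n + b * x) * hhost + a * m * S * (b * x * hIt - hvec)
    - a * b * Nv * x * hS

theorem lt_of_pos (ha : 0 < a) (hb : 0 < b) (hB : 0 < B) (hm : 0 < m) (hNv : 0 < Nv)
    (h : IsHostVectorEquilib a b B m n N Nv x S St It) (hx : 0 < x) :
    B * n < a * b * Nv * N := by
  have hx_mul := h.x_mul_eq hx.ne'
  nlinarith [mul_pos hx (by positivity : 0 < B * b * (a * Nv + m))]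

theorem unique (ha : 0 < a) (hb : 0 < b) (hB : 0 < B) (hm : 0 < m) (hn : 0 < n) (hNv : 0 < Nv)
    {x' S' St' It' : ℝ} (h : IsHostVectorEquilib a b B m n N Nv x S St It)
    (h' : IsHostVectorEquilib a b B m n N Nv x' S' St' It') (hx : 0 < x) (hx' : 0 < x') :
    x = x' ∧ S = S' ∧ St = St' ∧ It = It' := by
  have hE : B * b * (a * Nv + m) ≠ 0 := by positivity
  obtain rfl : x = x' := mul_right_cancel₀ hE ((h.x_mul_eq hx.ne').trans (h'.x_mul_eq hx'.ne').symm)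
  have hIt : It = It' := by
    rw [h.It_eq (by positivity), h'.It_eq (by positivity)]
  refine ⟨rfl, by rw [h.S_eq hm.ne', h'.S_eq hm.ne'], ?_, hIt⟩
  linarith [h.2.2.2, h'.2.2.2]

end IsHostVectorEquilib

theorem exists_isHostVectorEquilib (ha : 0 < a) (hb : 0 < b) (hB : 0 < B) (hm : 0 < m)
    (hn : 0 < n) (hNv : 0 < Nv) (hR : B * n < a * b * Nv * N) :
    ∃ x S St It, 0 < x ∧ IsHostVectorEquilib a b B m n N Nv x S St It := by
  have hE : 0 < B * b * (a * Nv + m) := by positivity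
  set x := m * (a * b * Nv * N - B * n) / (B * b * (a * Nv + m))
  have hx : 0 < x := div_pos (mul_pos hm (by linarith)) hE
  have hxE : x * (B * b * (a * Nv + m)) = m * (a * b * Nv * N - B * n) :=
    div_mul_cancel₀ _ hE.ne'
  have hden : 0 < n + b * x := by positivity
  set It := b * Nv * x / (n + b * x)
  have hItden : It * (n + b * x) = b * Nv * x := div_mul_cancel₀ _ hden.ne'
  set S := N - B * x / m
  have hSm : m * S = m * N - B * x := by
    simp only [S]
    field_simp
  refine ⟨x, S, Nv - It, It, hx, by linarith, ?_, by linear_combination -hItden, by ring⟩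
  refine mul_right_cancel₀ (mul_pos hm hden).ne' ?_
  linear_combination a * m * S * hItden + a * b * Nv * x * hSm - x * hxE

end HostVector

section Model

variable {j : ℕ} {γ : ℝ} {α μ : ℕ → ℝ}

theorem ccoef_zero : ccoef j γ α μ 0 = 1 := if_pos rfl

theorem ccoef_of_succ_lt {n : ℕ} (hn : n ≠ 0) (hnj : n + 1 < j) :
    ccoef j γ α μ n = α n / (α (n + 1) + μ (n + 1)) := by
  rw [ccoef, if_neg hn, if_neg (by omega)]

theorem ccoef_sub_one (hj : 2 ≤ j) : ccoef j γ α μ (j - 1) = α (j - 1) / (γ + μ j) := by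
  rw [ccoef, if_neg (by omega), if_pos rfl]

theorem ccoef_pos (hγ : 0 < γ) (hα : ∀ k, 1 ≤ k → k ≤ j - 1 → 0 < α k)
    (hμ : ∀ k, 1 ≤ k → k ≤ j → 0 < μ k) {l : ℕ} (hl : l < j) : 0 < ccoef j γ α μ l := by
  unfold ccoef
  split_ifs with h0 hlast
  · exact one_pos
  · exact div_pos (hα _ (by omega) (by omega)) (add_pos hγ (hμ j (by omega) le_rfl))
  · exact div_pos (hα _ (by omega) (by omega))
      (add_pos (hα _ (by omega) (by omega)) (hμ _ (by omega) (by omega)))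

theorem xiSum_pos (hj : 0 < j) (hγ : 0 < γ) (hα : ∀ k, 1 ≤ k → k ≤ j - 1 → 0 < α k)
    (hμ : ∀ k, 1 ≤ k → k ≤ j → 0 < μ k) : 0 < xiSum j γ α μ := by
  refine sum_pos (fun k hk => prod_pos fun l hl => ccoef_pos hγ hα hμ ?_)
    ⟨1, mem_Icc.mpr ⟨le_rfl, hj⟩⟩
  exact (mem_range.mp hl).trans_le (mem_Icc.mp hk).2

theorem chain_eqs_iff (hj : 2 ≤ j) (hγ : 0 < γ) (hα : ∀ k, 1 ≤ k → k ≤ j - 1 → 0 < α k)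
    (hμ : ∀ k, 1 ≤ k → k ≤ j → 0 < μ k) {I : ℕ → ℝ} :
    ((∀ k, 2 ≤ k → k ≤ j - 1 → α (k - 1) * I (k - 1) = (α k + μ k) * I k) ∧
        α (j - 1) * I (j - 1) = (γ + μ j) * I j) ↔
      ∀ k ∈ Icc 1 j, I k = (∏ l ∈ range k, ccoef j γ α μ l) * I 1 := by
  rw [← succ_eq_mul_iff_eq_prod_range_mul ccoef_zero]
  have hmid_den : ∀ k, 2 ≤ k → k ≤ j - 1 → α k + μ k ≠ 0 := fun k hk2 hkj =>
    (add_pos (hα k (by omega) hkj) (hμ k (by omega) (by omega))).ne'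
  have hlast_den : γ + μ j ≠ 0 := (add_pos hγ (hμ j (by omega) le_rfl)).ne'
  constructor
  · rintro ⟨hmid, hlast⟩ n hn hnj
    rcases Nat.lt_or_ge (n + 1) j with hlt | hge
    · have hk := hmid (n + 1) (by omega) (by omega)
      rw [Nat.add_sub_cancel] at hk
      rw [ccoef_of_succ_lt (by omega) hlt, div_mul_eq_mul_div,
        eq_div_iff (hmid_den _ (by omega) (by omega))]
      linarith
    · obtain rfl : n = j - 1 := by omega
      rw [ccoef_sub_one hj, Nat.sub_add_cancel (by omega), div_mul_eq_mul_div,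
        eq_div_iff hlast_den]
      linarith
  · intro h
    refine ⟨fun k hk2 hkj => ?_, ?_⟩
    · have hk := h (k - 1) (by omega) (by omega)
      rw [ccoef_of_succ_lt (by omega) (by omega), Nat.sub_add_cancel (by omega),
        div_mul_eq_mul_div, eq_div_iff (hmid_den k hk2 hkj)] at hk
      linarith
    · have hk := h (j - 1) (by omega) (by omega)
      rw [ccoef_sub_one hj, Nat.sub_add_cancel (by omega), div_mul_eq_mul_div,
        eq_div_iff hlast_den] at hk
      linarith

theorem sum_Icc_eq_xiSum_mul {I : ℕ → ℝ}
    (hI : ∀ k ∈ Icc 1 j, I k = (∏ l ∈ range k, ccoef j γ α μ l) * I 1) :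
    ∑ k ∈ Icc 1 j, I k = xiSum j γ α μ * I 1 := by
  rw [sum_congr rfl hI, xiSum, sum_mul]

theorem isEquilib_iff {f c cv Sb Sbv μs μr μts μt S R St It : ℝ} {I : ℕ → ℝ} (hj : 2 ≤ j)
    (hγ : 0 < γ) (hα : ∀ k, 1 ≤ k → k ≤ j - 1 → 0 < α k) (hμ : ∀ k, 1 ≤ k → k ≤ j → 0 < μ k)
    (hμr : μr ≠ 0) (hμeq : μts = μt) :
    IsEquilib j f c cv γ Sb Sbv μs μr μts μt α μ S R St It I ↔
      (∀ k ∈ Icc 1 j, I k = (∏ l ∈ range k, ccoef j γ α μ l) * I 1) ∧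
      R = γ * (∏ l ∈ range j, ccoef j γ α μ l) * I 1 / μr ∧
      IsHostVectorEquilib (f * cv / Sb) (f * c * xiSum j γ α μ / Sb) (α 1 + μ 1) μs μt Sb Sbv
        (I 1) S St It := by
  subst hμeq
  have hj_mem : j ∈ Icc 1 j := mem_Icc.mpr ⟨by omega, le_rfl⟩
  constructor
  · rintro ⟨h1, h2, hmid, hlast, hR, -, h7, hIt⟩
    have hI := (chain_eqs_iff hj hγ hα hμ).mp ⟨hmid, hlast⟩
    rw [sum_Icc_eq_xiSum_mul hI] at h7
    refine ⟨hI, ?_, h1.trans h2, by rw [← h2]; ring, by rw [← h7]; ring, hIt⟩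
    rw [eq_div_iff hμr, mul_assoc, ← hI j hj_mem]
    linarith
  · rintro ⟨hI, hR, hS, hhost, hvec, hIt⟩
    obtain ⟨hmid, hlast⟩ := (chain_eqs_iff hj hγ hα hμ).mpr hI
    have h2 : f * cv * It * S / Sb = (α 1 + μ 1) * I 1 := by rw [← hhost]; ring
    have h7 : f * c * St / Sb * ∑ k ∈ Icc 1 j, I k = μts * It := by
      rw [sum_Icc_eq_xiSum_mul hI, ← hvec]; ring
    refine ⟨hS.trans h2.symm, h2, hmid, hlast, ?_, by rw [h7, hIt], h7, hIt⟩
    rw [hR, hI j hj_mem]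
    field_simp

end Model

theorem stmt0_general (j : ℕ) (hj : 2 ≤ j)
    (f c cv γ Sb Sbv μs μr μts μt : ℝ) (α μ : ℕ → ℝ)
    (hf : 0 < f) (hc : 0 < c) (hcv : 0 < cv) (hγ : 0 < γ)
    (hSb : 0 < Sb) (hSbv : 0 < Sbv) (hμs : 0 < μs) (hμr : 0 < μr)
    (hμt : 0 < μt)
    (hα : ∀ k, 1 ≤ k → k ≤ j - 1 → 0 < α k)
    (hμ : ∀ k, 1 ≤ k → k ≤ j → 0 < μ k)
    (hμeq : μt = μts)
    (R0 : ℝ)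
    (hR0 : R0 = Real.sqrt
      (f ^ 2 * c * cv * Sbv * xiSum j γ α μ / (Sb * μt * (α 1 + μ 1)))) :
    (1 < R0 →
      ((∃ S R St It : ℝ, ∃ I : ℕ → ℝ, 0 < I 1 ∧
          IsEquilib j f c cv γ Sb Sbv μs μr μts μt α μ S R St It I) ∧
        (∀ S R St It : ℝ, ∀ I : ℕ → ℝ, ∀ S' R' St' It' : ℝ, ∀ I' : ℕ → ℝ,
          0 < I 1 → IsEquilib j f c cv γ Sb Sbv μs μr μts μt α μ S R St It I →
          0 < I' 1 → IsEquilib j f c cv γ Sb Sbv μs μr μts μt α μ S' R' St' It' I' →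
          S = S' ∧ R = R' ∧ St = St' ∧ It = It' ∧ ∀ k ∈ Icc 1 j, I k = I' k))) ∧
    (R0 < 1 →
      ¬ ∃ S R St It : ℝ, ∃ I : ℕ → ℝ, 0 < I 1 ∧
          IsEquilib j f c cv γ Sb Sbv μs μr μts μt α μ S R St It I) := by
  have hB : 0 < α 1 + μ 1 := add_pos (hα 1 le_rfl (by omega)) (hμ 1 le_rfl (by omega))
  have hξ := xiSum_pos (by omega) hγ hα hμ
  have ha : 0 < f * cv / Sb := by positivity
  have hb : 0 < f * c * xiSum j γ α μ / Sb := by positivity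
  have hD : 0 < (α 1 + μ 1) * μt := by positivity
  have hR0sq : f ^ 2 * c * cv * Sbv * xiSum j γ α μ / (Sb * μt * (α 1 + μ 1)) =
      f * cv / Sb * (f * c * xiSum j γ α μ / Sb) * Sbv * Sb / ((α 1 + μ 1) * μt) := by
    field_simp
  have hequiv (S R St It : ℝ) (I : ℕ → ℝ) :=
    isEquilib_iff (f := f) (c := c) (cv := cv) (Sb := Sb) (Sbv := Sbv) (μs := μs) (S := S)
      (R := R) (St := St) (It := It) (I := I) hj hγ hα hμ hμr.ne' hμeq.symm
  rw [hR0sq] at hR0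
  refine ⟨fun hR1 => ⟨?_, ?_⟩, fun hR1 => ?_⟩
  · rw [hR0, Real.lt_sqrt zero_le_one, one_pow, one_lt_div hD] at hR1
    obtain ⟨x, S, St, It, hx, hhv⟩ := exists_isHostVectorEquilib ha hb hB hμs hμt hSbv hR1
    have hP1 : ∏ l ∈ range 1, ccoef j γ α μ l = 1 := by rw [prod_range_one, ccoef_zero]
    refine ⟨S, _, St, It, fun k => (∏ l ∈ range k, ccoef j γ α μ l) * x,
      by simpa only [hP1, one_mul] using hx, (hequiv ..).mpr
        ⟨fun k _ => by simp only [hP1, one_mul], rfl, by simpa only [hP1, one_mul] using hhv⟩⟩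
  · intro S R St It I S' R' St' It' I' hI1 h hI1' h'
    obtain ⟨hI, rfl, hhv⟩ := (hequiv ..).mp h
    obtain ⟨hI', rfl, hhv'⟩ := (hequiv ..).mp h'
    obtain ⟨hx, rfl, rfl, rfl⟩ := hhv.unique ha hb hB hμs hμt hSbv hhv' hI1 hI1'
    exact ⟨rfl, by rw [hx], rfl, rfl, fun k hk => by rw [hI k hk, hI' k hk, hx]⟩
  · rintro ⟨S, R, St, It, I, hI1, h⟩
    have hlt := ((hequiv ..).mp h).2.2.lt_of_pos ha hb hB hμs hSbv hI1
    rw [hR0, Real.sqrt_lt' one_pos, one_pow, div_lt_one hD] at hR1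
    linarith

/-- If `R_0 > 1` there exists exactly one tuple
`(S, I_1, …, I_j, R, S̃, Ĩ)` with `I_1 > 0` satisfying all the equilibrium equations
(uniqueness being agreement of all the listed components); and if `R_0 < 1` no tuple
with `I_1 > 0` satisfies them. -/
theorem stmt0 (j : ℕ) (hj : 2 ≤ j)
    (f c cv γ Sb Sbv μs μr μts μt : ℝ) (α μ : ℕ → ℝ)
    (hf : 0 < f) (hc : 0 < c) (hcv : 0 < cv) (hγ : 0 < γ)
    (hSb : 0 < Sb) (hSbv : 0 < Sbv) (hμs : 0 < μs) (hμr : 0 < μr)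
    (hμts : 0 < μts) (hμt : 0 < μt)
    (hα : ∀ k, 1 ≤ k → k ≤ j - 1 → 0 < α k)
    (hμ : ∀ k, 1 ≤ k → k ≤ j → 0 < μ k)
    (hμeq : μt = μts)
    (R0 : ℝ)
    (hR0 : R0 = Real.sqrt
      (f ^ 2 * c * cv * Sbv * xiSum j γ α μ / (Sb * μt * (α 1 + μ 1)))) :
    (1 < R0 →
      ((∃ S R St It : ℝ, ∃ I : ℕ → ℝ, 0 < I 1 ∧
          IsEquilib j f c cv γ Sb Sbv μs μr μts μt α μ S R St It I) ∧
        (∀ S R St It : ℝ, ∀ I : ℕ → ℝ, ∀ S' R' St' It' : ℝ, ∀ I' : ℕ → ℝ,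
          0 < I 1 → IsEquilib j f c cv γ Sb Sbv μs μr μts μt α μ S R St It I →
          0 < I' 1 → IsEquilib j f c cv γ Sb Sbv μs μr μts μt α μ S' R' St' It' I' →
          S = S' ∧ R = R' ∧ St = St' ∧ It = It' ∧ ∀ k ∈ Icc 1 j, I k = I' k))) ∧
    (R0 < 1 →
      ¬ ∃ S R St It : ℝ, ∃ I : ℕ → ℝ, 0 < I 1 ∧
          IsEquilib j f c cv γ Sb Sbv μs μr μts μt α μ S R St It I) :=
  stmt0_general j hj f c cv γ Sb Sbv μs μr μts μt α μ hf hc hcv hγ hSb hSbv hμs hμr hμt hα hμ hμeq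
    R0 hR0
end

section
/- Suppose all infected and recovered host death rates equal the susceptible death rate, i.e. μ_1 = ⋯ = μ_j = μ_r = μ_s. If differentiable functions S, I_1, …, I_j, R, Ĩ : ℝ → ℝ satisfy the host equations of the model and the total host population N = S + Σ_{k=1}^j I_k + R satisfies N(0) = S̄, then N(t) = S̄ for all t ≥ 0; that is, the manifold N = S̄ is invariant. -/
/-!
With equal death rates, infection, progression through the relapse stages and recovery only move
hosts between compartments, so summing the host equations leaves `N' = β(N) - μ_s N`, i.e. the
logistic equation `N' = c N (S̄ - N)` with `c = (β₁ - μ_s) / S̄`. Hence `N - S̄` solves the linear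
equation `y' = -c N y` with `y 0 = 0`, and the integrating factor `exp (∫ c N)` shows `y ≡ 0`.
-/

open Finset

theorem eq_zero_of_hasDerivAt_mul {y g : ℝ → ℝ} (hg : Continuous g)
    (hy : ∀ t, HasDerivAt y (g t * y t) t) {t₀ : ℝ} (h₀ : y t₀ = 0) (t : ℝ) : y t = 0 := by
  set G : ℝ → ℝ := fun t => ∫ s in t₀..t, g s
  have hG : ∀ t, HasDerivAt G (g t) t := fun t =>
    intervalIntegral.integral_hasDerivAt_right (hg.intervalIntegrable _ _)
      (hg.stronglyMeasurableAtFilter _ _) hg.continuousAt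
  have hw : ∀ t, HasDerivAt (fun t => y t * Real.exp (-G t)) 0 t := fun t =>
    ((hy t).mul (hG t).neg.exp).congr_deriv (by ring)
  have hconst := is_const_of_deriv_eq_zero (fun t => (hw t).differentiableAt)
    (fun t => (hw t).deriv) t t₀
  simpa [h₀, Real.exp_ne_zero] using hconst

theorem hasDerivAt_sum_Icc_of_chain {x flux : ℕ → ℝ → ℝ} {m t : ℝ} {j : ℕ} (hj : 1 ≤ j)
    (hx : ∀ k ∈ Icc 1 j, HasDerivAt (x k) (flux (k - 1) t - flux k t - m * x k t) t) :
    HasDerivAt (fun s => ∑ k ∈ Icc 1 j, x k s)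
      (flux 0 t - flux j t - m * ∑ k ∈ Icc 1 j, x k t) t := by
  have htelescope : ∑ k ∈ Icc 1 j, (flux (k - 1) t - flux k t) = flux 0 t - flux j t := by
    have := sum_Icc_sub hj fun k => flux (k - 1) t
    simp only [Nat.add_sub_cancel, Nat.sub_self] at this
    rw [← neg_sub, ← this, ← sum_neg_distrib]
    simp_rw [neg_sub]
  refine (HasDerivAt.fun_sum hx).congr_deriv ?_
  rw [sum_sub_distrib, htelescope, mul_sum]

/-- The flux out of compartment `k` of the host chain `S → I₁ → ⋯ → I_j → R`, with `S` as `k = 0`. -/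
def outflow (j : ℕ) (force : ℝ → ℝ) (α : ℕ → ℝ) (γ : ℝ) (I : ℕ → ℝ → ℝ) (k : ℕ) (t : ℝ) : ℝ :=
  if k = 0 then force t else if k = j then γ * I j t else α k * I k t

theorem hasDerivAt_infected_eq_outflow {j : ℕ} (hj : 2 ≤ j) {force : ℝ → ℝ} {α μ : ℕ → ℝ}
    {γ m : ℝ} {I : ℕ → ℝ → ℝ} (hμ : ∀ k, 1 ≤ k → k ≤ j → μ k = m)
    (hI1 : ∀ t, HasDerivAt (I 1) (force t - (α 1 + μ 1) * I 1 t) t)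
    (hIk : ∀ k, 2 ≤ k → k ≤ j - 1 → ∀ t, HasDerivAt (I k)
      (α (k - 1) * I (k - 1) t - (α k + μ k) * I k t) t)
    (hIj : ∀ t, HasDerivAt (I j) (α (j - 1) * I (j - 1) t - (γ + μ j) * I j t) t) (t : ℝ) :
    ∀ k ∈ Icc 1 j, HasDerivAt (I k)
      (outflow j force α γ I (k - 1) t - outflow j force α γ I k t - m * I k t) t := by
  intro k hk
  rw [mem_Icc] at hk
  rw [← hμ k hk.1 hk.2]
  rcases eq_or_ne k 1 with rfl | hk1
  · refine (hI1 t).congr_deriv ?_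
    simp only [outflow, tsub_self, ↓reduceIte, one_ne_zero, show 1 ≠ j by omega]
    ring
  rcases eq_or_ne k j with rfl | hkj
  · refine (hIj t).congr_deriv ?_
    simp only [outflow, show k - 1 ≠ 0 by omega, show k - 1 ≠ k by omega, show k ≠ 0 by omega,
      ↓reduceIte]
    ring
  · refine (hIk k (by omega) (by omega) t).congr_deriv ?_
    simp only [outflow, show k - 1 ≠ 0 by omega, show k - 1 ≠ j by omega, show k ≠ 0 by omega, hkj,
      ↓reduceIte]
    ring

theorem hasDerivAt_sum_infected {j : ℕ} (hj : 2 ≤ j) {force : ℝ → ℝ} {α μ : ℕ → ℝ} {γ m : ℝ}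
    {I : ℕ → ℝ → ℝ} (hμ : ∀ k, 1 ≤ k → k ≤ j → μ k = m)
    (hI1 : ∀ t, HasDerivAt (I 1) (force t - (α 1 + μ 1) * I 1 t) t)
    (hIk : ∀ k, 2 ≤ k → k ≤ j - 1 → ∀ t, HasDerivAt (I k)
      (α (k - 1) * I (k - 1) t - (α k + μ k) * I k t) t)
    (hIj : ∀ t, HasDerivAt (I j) (α (j - 1) * I (j - 1) t - (γ + μ j) * I j t) t) (t : ℝ) :
    HasDerivAt (fun s => ∑ k ∈ Icc 1 j, I k s)
      (force t - γ * I j t - m * ∑ k ∈ Icc 1 j, I k t) t := by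
  have := hasDerivAt_sum_Icc_of_chain (by omega)
    (hasDerivAt_infected_eq_outflow hj hμ hI1 hIk hIj t)
  simpa [outflow, show j ≠ 0 by omega] using this

theorem stmt4_general (j : ℕ) (hj : 2 ≤ j)
    (f cv γ β1 Sb μs μr : ℝ) (α μ : ℕ → ℝ)
    (hSb : 0 < Sb)
    (heq : ∀ k, 1 ≤ k → k ≤ j → μ k = μs) (heqr : μr = μs)
    (S R It : ℝ → ℝ) (I : ℕ → ℝ → ℝ)
    (N : ℝ → ℝ) (hN : ∀ t, N t = S t + (∑ k ∈ Icc 1 j, I k t) + R t)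
    (hS : ∀ t, HasDerivAt S
      ((β1 * N t - (β1 - μs) / Sb * N t ^ 2) - f * cv * It t * S t / N t - μs * S t) t)
    (hI1 : ∀ t, HasDerivAt (I 1)
      (f * cv * It t * S t / N t - (α 1 + μ 1) * I 1 t) t)
    (hIk : ∀ k, 2 ≤ k → k ≤ j - 1 → ∀ t, HasDerivAt (I k)
      (α (k - 1) * I (k - 1) t - (α k + μ k) * I k t) t)
    (hIj : ∀ t, HasDerivAt (I j)
      (α (j - 1) * I (j - 1) t - (γ + μ j) * I j t) t)
    (hR : ∀ t, HasDerivAt R (γ * I j t - μr * R t) t)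
    (hN0 : N 0 = Sb) :
    ∀ t : ℝ, 0 ≤ t → N t = Sb := by
  set c := (β1 - μs) / Sb
  have hcSb : c * Sb = β1 - μs := div_mul_cancel₀ _ hSb.ne'
  have hlogistic : ∀ t, HasDerivAt N (c * N t * (Sb - N t)) t := by
    intro t
    have hsum := ((hS t).fun_add
      (hasDerivAt_sum_infected (force := fun t => f * cv * It t * S t / N t)
        hj heq hI1 hIk hIj t)).fun_add (hR t)
    rw [← funext hN] at hsum
    refine hsum.congr_deriv ?_
    rw [heqr]
    linear_combination μs * hN t - N t * hcSb
  have hgap : ∀ t, HasDerivAt (fun t => N t - Sb) (-(c * N t) * (N t - Sb)) t := fun t =>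
    ((hlogistic t).sub_const Sb).congr_deriv (by ring)
  have hNcont : Continuous N := continuous_iff_continuousAt.2 fun t => (hlogistic t).continuousAt
  intro t _
  linarith [eq_zero_of_hasDerivAt_mul (hNcont.const_mul c).neg hgap (t₀ := 0) (by simp [hN0]) t]

/-- If all infected and recovered host death rates equal the
susceptible death rate `μ_s`, and differentiable functions `S, I_1, …, I_j, R, Ĩ`
satisfy the host equations of the relapsing model with total host population
`N = S + Σ_{k=1}^j I_k + R` satisfying `N(0) = S̄`, then `N(t) = S̄` for all `t ≥ 0`;
that is, the manifold `N = S̄` is invariant. -/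
theorem stmt4 (j : ℕ) (hj : 2 ≤ j)
    (f cv γ β1 Sb μs μr : ℝ) (α μ : ℕ → ℝ)
    (hf : 0 < f) (hcv : 0 < cv) (hγ : 0 < γ) (hβ1 : 0 < β1) (hSb : 0 < Sb)
    (hμs : 0 < μs) (hμr : 0 < μr)
    (hα : ∀ k, 1 ≤ k → k ≤ j - 1 → 0 < α k)
    (hμpos : ∀ k, 1 ≤ k → k ≤ j → 0 < μ k)
    (hβμ : μs < β1)
    (heq : ∀ k, 1 ≤ k → k ≤ j → μ k = μs) (heqr : μr = μs)
    (S R It : ℝ → ℝ) (I : ℕ → ℝ → ℝ)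
    (hIt : Differentiable ℝ It)
    (N : ℝ → ℝ) (hN : ∀ t, N t = S t + (∑ k ∈ Icc 1 j, I k t) + R t)
    (hNpos : ∀ t, 0 < N t)
    (hS : ∀ t, HasDerivAt S
      ((β1 * N t - (β1 - μs) / Sb * N t ^ 2) - f * cv * It t * S t / N t - μs * S t) t)
    (hI1 : ∀ t, HasDerivAt (I 1)
      (f * cv * It t * S t / N t - (α 1 + μ 1) * I 1 t) t)
    (hIk : ∀ k, 2 ≤ k → k ≤ j - 1 → ∀ t, HasDerivAt (I k)
      (α (k - 1) * I (k - 1) t - (α k + μ k) * I k t) t)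
    (hIj : ∀ t, HasDerivAt (I j)
      (α (j - 1) * I (j - 1) t - (γ + μ j) * I j t) t)
    (hR : ∀ t, HasDerivAt R (γ * I j t - μr * R t) t)
    (hN0 : N 0 = Sb) :
    ∀ t : ℝ, 0 ≤ t → N t = Sb :=
  stmt4_general j hj f cv γ β1 Sb μs μr α μ hSb heq heqr S R It I N hN hS hI1 hIk hIj hR hN0
end

section
/- The characteristic polynomial of the matrix product W·V⁻¹ equals X^{j+1} − (ρ·k·δ₁/b̃)·X^{j−1}, where δ₁ = Σ_{m=1}^{j} Π_{l=1}^{m} q_{l−1}/(q_l + b_l). Consequently the nonzero eigenvalues of W·V⁻¹ are λ = ±√(ρ·k·δ₁/b̃). -/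
/-!
Only rows `0` and `j` of `W` are nonzero, so `W = U * R` with `U = [e₀ e_j]` of size `(j+1) × 2`,
and `(U * (R * V⁻¹)).charpoly = X ^ (j - 1) * (R * V⁻¹ * U).charpoly`. Column `j` of `V` is
`b̃ e_j`, so `V⁻¹ e_j = e_j / b̃`; forward substitution in the lower bidiagonal block of `V` gives
`(V⁻¹ e₀)_l = ∏_{m=1}^{l+1} q_{m-1}/(q_m + b_m)` for `l < j` and `(V⁻¹ e₀)_j = 0`. Hence
`R * V⁻¹ * U = !![0, k/b̃; ρ δ₁, 0]`, whose characteristic polynomial is `X² - ρ k δ₁ / b̃`.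
-/

open Finset Polynomial

lemma Matrix.charpoly_of_fin_two_antidiag {R : Type*} [CommRing R] [Nontrivial R] (a c : R) :
    (!![0, a; c, 0] : Matrix (Fin 2) (Fin 2) R).charpoly = X ^ 2 - C (a * c) := by
  simp [Matrix.charpoly_fin_two, Matrix.trace_fin_two, Matrix.det_fin_two, sub_eq_add_neg]

lemma Real.sq_eq_iff_eq_sqrt_or_eq_neg_sqrt {x c : ℝ} (hx : x ≠ 0) :
    x ^ 2 = c ↔ x = √c ∨ x = -√c := by
  constructor
  · rintro rfl
    rw [Real.sqrt_sq_eq_abs]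
    rcases abs_choice x with h | h <;> [left; right] <;> linarith
  · intro h
    have hc : 0 ≤ c := by
      by_contra hc
      rcases h with h | h <;> simp [Real.sqrt_eq_zero'.mpr (not_le.mp hc).le, hx] at h
    rcases h with rfl | rfl <;> simp [hc]

lemma isRoot_X_pow_succ_sub_C_mul_X_pow_pred_iff {R : Type*} [CommRing R] [IsDomain R] {n : ℕ}
    (hn : 1 ≤ n) {c x : R} (hx : x ≠ 0) :
    (X ^ (n + 1) - C c * X ^ (n - 1)).IsRoot x ↔ x ^ 2 = c := by
  have hsplit : x ^ (n + 1) = x ^ (n - 1) * x ^ 2 := by rw [← pow_add]; congr 1; omega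
  simp only [IsRoot.def, eval_sub, eval_pow, eval_mul, eval_C, eval_X, hsplit, sub_eq_zero,
    mul_comm c]
  exact mul_right_inj' (pow_ne_zero _ hx)

noncomputable section

open Matrix

def relapseV (j : ℕ) (q b : ℕ → ℝ) (bt : ℝ) : Matrix (Fin (j + 1)) (Fin (j + 1)) ℝ :=
  Matrix.of fun i l : Fin (j + 1) =>
    if i = l then (if (i : ℕ) < j then q ((i : ℕ) + 1) + b ((i : ℕ) + 1) else bt)
    else if (i : ℕ) = (l : ℕ) + 1 ∧ (i : ℕ) < j then -q ((l : ℕ) + 1)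
    else 0

def relapseW (j : ℕ) (k ρ : ℝ) : Matrix (Fin (j + 1)) (Fin (j + 1)) ℝ :=
  Matrix.of fun i l : Fin (j + 1) =>
    if (i : ℕ) = 0 ∧ (l : ℕ) = j then k
    else if (i : ℕ) = j ∧ (l : ℕ) < j then ρ
    else 0

def relapseWeight (q b : ℕ → ℝ) (m : ℕ) : ℝ :=
  ∏ l ∈ Icc 1 m, q (l - 1) / (q l + b l)

def endpointCols (j : ℕ) : Matrix (Fin (j + 1)) (Fin 2) ℝ :=
  Matrix.of fun i a => if i = ![0, Fin.last j] a then 1 else 0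

def relapseWRows (j : ℕ) (k ρ : ℝ) : Matrix (Fin 2) (Fin (j + 1)) ℝ :=
  Matrix.of ![fun l => if l = Fin.last j then k else 0, fun l => if (l : ℕ) < j then ρ else 0]

def relapseVInvCols (j : ℕ) (q b : ℕ → ℝ) (bt : ℝ) : Matrix (Fin (j + 1)) (Fin 2) ℝ :=
  Matrix.of fun i => ![if (i : ℕ) < j then relapseWeight q b (i + 1) else 0,
    if i = Fin.last j then bt⁻¹ else 0]

lemma relapseWeight_succ (q b : ℕ → ℝ) (m : ℕ) :
    relapseWeight q b (m + 1) = relapseWeight q b m * (q m / (q (m + 1) + b (m + 1))) := by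
  rw [relapseWeight, prod_Icc_succ_top (by omega), Nat.add_sub_cancel, relapseWeight]

lemma relapseWeight_mul_succ {q b : ℕ → ℝ} {m : ℕ} (h : q (m + 1) + b (m + 1) ≠ 0) :
    (q (m + 1) + b (m + 1)) * relapseWeight q b (m + 1) = q m * relapseWeight q b m := by
  rw [relapseWeight_succ]
  field_simp

lemma relapseW_eq_endpointCols_mul (j : ℕ) (k ρ : ℝ) :
    relapseW j k ρ = endpointCols j * relapseWRows j k ρ := by
  ext i l
  simp only [relapseW, endpointCols, relapseWRows, of_apply, mul_apply, Fin.sum_univ_two,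
    Matrix.cons_val_zero, Matrix.cons_val_one, ite_mul, one_mul, zero_mul]
  simp only [Fin.ext_iff, Fin.val_zero, Fin.val_last]
  split_ifs <;> first | omega | simp

lemma relapseV_det_ne_zero {j : ℕ} {q b : ℕ → ℝ} {bt : ℝ}
    (hqb : ∀ l ∈ Icc 1 j, q l + b l ≠ 0) (hbt : bt ≠ 0) : (relapseV j q b bt).det ≠ 0 := by
  have htri : (relapseV j q b bt).IsLowerTriangular := by
    intro i l (hil : i < l)
    simp only [relapseV, of_apply, hil.ne, if_false, Fin.lt_def] at hil ⊢
    rw [if_neg (by omega)]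
  rw [det_of_isLowerTriangular _ htri, prod_ne_zero_iff]
  intro i _
  simp only [relapseV, of_apply, if_true]
  split_ifs with hi
  · exact hqb _ (mem_Icc.mpr ⟨by omega, by omega⟩)
  · exact hbt

-- Row `l < j` reads `(q_{l+1} + b_{l+1}) w_{l+1} - q_l w_l`, which vanishes by
-- `relapseWeight_mul_succ`, except in row `0`, where the subdiagonal term is absent and
-- `q_0 w_0 = 1`.
lemma relapseV_mulVec_weights {j : ℕ} (hj : 1 ≤ j) {q b : ℕ → ℝ} (bt : ℝ) (hq0 : q 0 = 1)
    (hqb : ∀ l ∈ Icc 1 j, q l + b l ≠ 0) :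
    relapseV j q b bt *ᵥ (fun l => if (l : ℕ) < j then relapseWeight q b (l + 1) else 0) =
      Pi.single 0 1 := by
  ext i
  obtain ⟨n, hn⟩ := i
  simp only [mulVec, dotProduct, relapseV, of_apply, Fin.ext_iff]
  rw [Fin.sum_univ_eq_sum_range (fun l =>
    (if n = l then (if n < j then q (n + 1) + b (n + 1) else bt)
      else if n = l + 1 ∧ n < j then -q (l + 1) else 0) *
    (if l < j then relapseWeight q b (l + 1) else 0))]
  simp only [Pi.single_apply, Fin.ext_iff, Fin.val_zero]
  rcases Nat.lt_succ_iff_lt_or_eq.mp hn with hnj | rfl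
  · rcases n with _ | m
    · rw [sum_eq_single_of_mem 0 (by simp) (fun l _ hl => by simp [Ne.symm hl])]
      rw [if_pos rfl, if_pos hnj, if_pos hnj,
        relapseWeight_mul_succ (hqb 1 (mem_Icc.mpr ⟨le_rfl, hnj⟩)), hq0]
      simp [relapseWeight]
    · rw [sum_eq_add_of_mem (m + 1) m (by simp; omega) (by simp; omega) (by omega)
        (fun l _ hl => by simp [Ne.symm hl.1, Ne.symm hl.2])]
      simp [hnj, show m < j by omega,
        relapseWeight_mul_succ (hqb (m + 2) (mem_Icc.mpr ⟨by omega, hnj⟩))]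
  · rw [sum_eq_single_of_mem n (by simp) (fun l _ hl => by simp [Ne.symm hl])]
    simp only [lt_irrefl, if_true, if_false, mul_zero]
    rw [if_neg (by omega)]

lemma relapseV_mul_relapseVInvCols {j : ℕ} (hj : 1 ≤ j) {q b : ℕ → ℝ} {bt : ℝ} (hq0 : q 0 = 1)
    (hqb : ∀ l ∈ Icc 1 j, q l + b l ≠ 0) (hbt : bt ≠ 0) :
    relapseV j q b bt * relapseVInvCols j q b bt = endpointCols j := by
  refine Matrix.ext fun i => Fin.forall_fin_two.mpr ⟨?_, ?_⟩
  · convert congrFun (relapseV_mulVec_weights hj bt hq0 hqb) i using 1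
    · rfl
    · simp only [endpointCols, Pi.single_apply, of_apply, cons_val_zero]
      congr
  · simp only [mul_apply, relapseVInvCols, endpointCols, of_apply, cons_val_one, cons_val_zero,
      mul_ite, mul_zero, sum_ite_eq', mem_univ, if_true]
    by_cases h : i = Fin.last j
    · simp [relapseV, h, hbt]
    · simp only [relapseV, of_apply, h, if_false, Fin.val_last]
      rw [if_neg (by omega), zero_mul]

lemma relapseWRows_mul_relapseVInvCols (j : ℕ) (q b : ℕ → ℝ) (bt k ρ : ℝ) :
    relapseWRows j k ρ * relapseVInvCols j q b bt =
      !![0, k / bt; ρ * ∑ m ∈ Icc 1 j, relapseWeight q b m, 0] := by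
  ext a c
  fin_cases a <;> fin_cases c
  · rw [mul_apply, Fin.sum_univ_castSucc]
    simp [relapseWRows, relapseVInvCols, Fin.castSucc_ne_last]
  · simp [mul_apply, relapseWRows, relapseVInvCols, div_eq_mul_inv]
  · have hshift : ∑ i : Fin j, relapseWeight q b (i + 1) = ∑ m ∈ Icc 1 j, relapseWeight q b m := by
      rw [Fin.sum_univ_eq_sum_range (fun i => relapseWeight q b (i + 1)), range_eq_Ico,
        sum_Ico_add', Ico_add_one_right_eq_Icc]
    rw [mul_apply, Fin.sum_univ_castSucc]
    simp [relapseWRows, relapseVInvCols, ← mul_sum, hshift]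
  · simp [mul_apply, relapseWRows, relapseVInvCols]

lemma relapseV_inv_mul_endpointCols {j : ℕ} (hj : 1 ≤ j) {q b : ℕ → ℝ} {bt : ℝ} (hq0 : q 0 = 1)
    (hqb : ∀ l ∈ Icc 1 j, q l + b l ≠ 0) (hbt : bt ≠ 0) :
    (relapseV j q b bt)⁻¹ * endpointCols j = relapseVInvCols j q b bt := by
  rw [← relapseV_mul_relapseVInvCols hj hq0 hqb hbt,
    nonsing_inv_mul_cancel_left _ _ (isUnit_iff_ne_zero.mpr (relapseV_det_ne_zero hqb hbt))]

end

theorem stmt6_general (j : ℕ) (hj : 1 ≤ j) (q b : ℕ → ℝ) (bt k ρ : ℝ)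
    (hq0 : q 0 = 1) (hqj : q j = 1)
    (hq : ∀ l, 1 ≤ l → l ≤ j - 1 → 0 < q l)
    (hb : ∀ l, 1 ≤ l → l ≤ j → 0 < b l)
    (hbt : 0 < bt)
    (V W : Matrix (Fin (j + 1)) (Fin (j + 1)) ℝ)
    (hV : V = Matrix.of fun i l : Fin (j + 1) =>
      if i = l then (if (i : ℕ) < j then q ((i : ℕ) + 1) + b ((i : ℕ) + 1) else bt)
      else if (i : ℕ) = (l : ℕ) + 1 ∧ (i : ℕ) < j then -q ((l : ℕ) + 1)
      else 0)
    (hW : W = Matrix.of fun i l : Fin (j + 1) =>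
      if (i : ℕ) = 0 ∧ (l : ℕ) = j then k
      else if (i : ℕ) = j ∧ (l : ℕ) < j then ρ
      else 0) :
    (W * V⁻¹).charpoly =
        X ^ (j + 1) -
          C (ρ * k * (∑ m ∈ Icc 1 j, ∏ l ∈ Icc 1 m, q (l - 1) / (q l + b l)) / bt) *
            X ^ (j - 1) ∧
    ∀ lam : ℝ, lam ≠ 0 →
      (lam ∈ spectrum ℝ (W * V⁻¹) ↔
        lam = Real.sqrt (ρ * k * (∑ m ∈ Icc 1 j, ∏ l ∈ Icc 1 m, q (l - 1) / (q l + b l)) / bt) ∨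
        lam = -Real.sqrt (ρ * k * (∑ m ∈ Icc 1 j, ∏ l ∈ Icc 1 m, q (l - 1) / (q l + b l)) / bt)) := by
  have hqb : ∀ l ∈ Icc 1 j, q l + b l ≠ 0 := by
    intro l hl
    obtain ⟨hl1, hlj⟩ := mem_Icc.mp hl
    have hql : 0 < q l := by
      rcases hlj.lt_or_eq with hlj | rfl
      · exact hq l hl1 (by omega)
      · exact hqj ▸ one_pos
    exact (add_pos hql (hb l hl1 hlj)).ne'
  have hcp : (W * V⁻¹).charpoly = X ^ (j + 1) -
      C (ρ * k * (∑ m ∈ Icc 1 j, relapseWeight q b m) / bt) * X ^ (j - 1) := by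
    rw [show W = relapseW j k ρ from hW, show V = relapseV j q b bt from hV,
      relapseW_eq_endpointCols_mul, Matrix.mul_assoc,
      Matrix.charpoly_mul_comm_of_le _ _ (by simp [hj]), Matrix.mul_assoc,
      relapseV_inv_mul_endpointCols hj hq0 hqb hbt.ne', relapseWRows_mul_relapseVInvCols,
      Matrix.charpoly_of_fin_two_antidiag, Fintype.card_fin, Fintype.card_fin,
      show j + 1 - 2 = j - 1 by omega]
    rw [mul_sub, ← pow_add, show j - 1 + 2 = j + 1 by omega, mul_comm (X ^ (j - 1)),
      show k / bt * (ρ * ∑ m ∈ Icc 1 j, relapseWeight q b m) =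
        ρ * k * (∑ m ∈ Icc 1 j, relapseWeight q b m) / bt by ring]
  refine ⟨hcp, fun lam hlam => ?_⟩
  rw [Matrix.mem_spectrum_iff_isRoot_charpoly, hcp,
    isRoot_X_pow_succ_sub_C_mul_X_pow_pred_iff hj hlam, Real.sq_eq_iff_eq_sqrt_or_eq_neg_sqrt hlam]
  rfl

/-- The characteristic polynomial of the next-generation matrix `W·V⁻¹`
of the relapsing host–vector model equals `X^{j+1} − (ρ·k·δ₁/b̃)·X^{j−1}`, where
`δ₁ = Σ_{m=1}^{j} Π_{l=1}^{m} q_{l−1}/(q_l + b_l)`; consequently its nonzero eigenvalues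
are `λ = ±√(ρ·k·δ₁/b̃)`.  (Rows/columns are 0-indexed: index `i : Fin (j+1)` corresponds
to the 1-indexed row `i+1` of the paper.) -/
theorem stmt6 (j : ℕ) (hj : 1 ≤ j) (q b : ℕ → ℝ) (bt k ρ : ℝ)
    (hq0 : q 0 = 1) (hqj : q j = 1)
    (hq : ∀ l, 1 ≤ l → l ≤ j - 1 → 0 < q l)
    (hb : ∀ l, 1 ≤ l → l ≤ j → 0 < b l)
    (hbt : 0 < bt) (hk : 0 < k) (hρ : 0 < ρ)
    (V W : Matrix (Fin (j + 1)) (Fin (j + 1)) ℝ)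
    (hV : V = Matrix.of fun i l : Fin (j + 1) =>
      if i = l then (if (i : ℕ) < j then q ((i : ℕ) + 1) + b ((i : ℕ) + 1) else bt)
      else if (i : ℕ) = (l : ℕ) + 1 ∧ (i : ℕ) < j then -q ((l : ℕ) + 1)
      else 0)
    (hW : W = Matrix.of fun i l : Fin (j + 1) =>
      if (i : ℕ) = 0 ∧ (l : ℕ) = j then k
      else if (i : ℕ) = j ∧ (l : ℕ) < j then ρ
      else 0) :
    (W * V⁻¹).charpoly =
        X ^ (j + 1) -
          C (ρ * k * (∑ m ∈ Icc 1 j, ∏ l ∈ Icc 1 m, q (l - 1) / (q l + b l)) / bt) *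
            X ^ (j - 1) ∧
    ∀ lam : ℝ, lam ≠ 0 →
      (lam ∈ spectrum ℝ (W * V⁻¹) ↔
        lam = Real.sqrt (ρ * k * (∑ m ∈ Icc 1 j, ∏ l ∈ Icc 1 m, q (l - 1) / (q l + b l)) / bt) ∨
        lam = -Real.sqrt (ρ * k * (∑ m ∈ Icc 1 j, ∏ l ∈ Icc 1 m, q (l - 1) / (q l + b l)) / bt)) :=
  stmt6_general j hj q b bt k ρ hq0 hqj hq hb hbt V W hV hW
end

section
/- Let n ≥ 2 and let M be an n×n real matrix all of whose rows other than the first and the last are zero. Then for every real λ, det(M − λ·I) = (−λ)^{n−2}·[(M_{1,1} − λ)·(M_{n,n} − λ) − M_{1,n}·M_{n,1}]. -/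
/-! Each middle row of `M - λ • 1` is `-λ` times a standard basis row, so the matrix is block
triangular for the splitting of the indices into `{first, last}` and the rest: the middle block
is `-λ • 1` and the outer block is the `2 × 2` matrix of the four corner entries. -/

def finTwoEquivSubtypeEqOrEq {ι : Type*} [DecidableEq ι] {a b : ι} (hab : a ≠ b) :
    Fin 2 ≃ {i // i = a ∨ i = b} where
  toFun k := if k = 0 then ⟨a, .inl rfl⟩ else ⟨b, .inr rfl⟩
  invFun i := if i.1 = a then 0 else 1
  left_inv k := by fin_cases k <;> simp [hab.symm]
  right_inv := by rintro ⟨i, rfl | rfl⟩ <;> simp [hab.symm]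

namespace Matrix

variable {R ι : Type*} [CommRing R] [Fintype ι] [DecidableEq ι]

theorem det_eq_pow_mul_det_toSquareBlockProp (A : Matrix ι ι R) (p : ι → Prop) [DecidablePred p]
    (c : R) (hA : ∀ i, ¬p i → A i = Pi.single i c) :
    A.det = c ^ Fintype.card {i // ¬p i} * (A.toSquareBlockProp p).det := by
  have hblock : A.toSquareBlockProp (fun i => ¬p i) = c • 1 := by
    ext i j
    simp [toSquareBlockProp_def, hA i i.2, Pi.single_apply, one_apply, Subtype.ext_iff, eq_comm]
  rw [twoBlockTriangular_det A p fun i hi j hj => ?_, hblock, det_smul, det_one, mul_one, mul_comm]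
  rw [hA i hi, Pi.single_apply, if_neg (by rintro rfl; exact hi hj)]

theorem det_toSquareBlockProp_eq_or_eq (A : Matrix ι ι R) {a b : ι} (hab : a ≠ b) :
    (A.toSquareBlockProp fun i => i = a ∨ i = b).det = A a a * A b b - A a b * A b a := by
  rw [← det_submatrix_equiv_self (finTwoEquivSubtypeEqOrEq hab), det_fin_two]
  simp [finTwoEquivSubtypeEqOrEq, toSquareBlockProp_def]

end Matrix

open Matrix

/-- If all rows of an `n×n` real matrix other than the first and the
last are zero, then `det(M − λI) = (−λ)^{n−2}·[(M₁₁ − λ)(Mₙₙ − λ) − M₁ₙ·Mₙ₁]`. -/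
theorem stmt7 (n : ℕ) (hn : 2 ≤ n) (M : Matrix (Fin n) (Fin n) ℝ)
    (hM : ∀ i : Fin n, 1 ≤ (i : ℕ) → (i : ℕ) ≤ n - 2 → ∀ l, M i l = 0) :
    ∀ lam : ℝ,
      (M - lam • (1 : Matrix (Fin n) (Fin n) ℝ)).det =
        (-lam) ^ (n - 2) *
          ((M ⟨0, by omega⟩ ⟨0, by omega⟩ - lam) *
              (M ⟨n - 1, by omega⟩ ⟨n - 1, by omega⟩ - lam) -
            M ⟨0, by omega⟩ ⟨n - 1, by omega⟩ * M ⟨n - 1, by omega⟩ ⟨0, by omega⟩) := by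
  intro lam
  set a : Fin n := ⟨0, by omega⟩
  set b : Fin n := ⟨n - 1, by omega⟩
  have hab : a ≠ b := Fin.ne_of_val_ne (by simp [a, b]; omega)
  have hrows : ∀ i, ¬(i = a ∨ i = b) → (M - lam • 1) i = Pi.single i (-lam) := by
    intro i hi
    have hia : (i : ℕ) ≠ 0 := fun h => hi (.inl (Fin.ext h))
    have hib : (i : ℕ) ≠ n - 1 := fun h => hi (.inr (Fin.ext h))
    have hMi : M i = 0 := funext <| hM i (by omega) (by omega)
    ext j
    obtain rfl | hij := eq_or_ne i j
    · simp [hMi]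
    · simp [hMi, hij]
  have hcard : Fintype.card {i // ¬(i = a ∨ i = b)} = n - 2 := by
    rw [Fintype.card_subtype_compl, ← Fintype.card_congr (finTwoEquivSubtypeEqOrEq hab)]
    simp
  rw [det_eq_pow_mul_det_toSquareBlockProp _ _ _ hrows, hcard, det_toSquareBlockProp_eq_or_eq _ hab]
  simp [one_apply, hab, hab.symm]
end

section
/- Let γ > 0, μ > 0, and let α_1, α_2, … be positive reals with α_0 = 1. For j ≥ 1 define S_j = Σ_{k=1}^{j} Π_{l=1}^{k} α_{l−1}/d^{(j)}_l, where d^{(j)}_l = α_l + μ for 1 ≤ l ≤ j−1 and d^{(j)}_j = γ + μ. Then S_{j+1} > S_j for every j ≥ 1. Consequently, with equal death rates in all infected compartments and all other parameters fixed, the basic reproduction number R_0 = f·√((c·c_v·S̄_v/(μ̃·S̄))·S_j) strictly increases with the number of relapses j − 1. -/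
/-!
Write `q_k = Π_{l=1}^{k} α_{l-1}/(α_l + μ)` (`relapseWeight`), the part of the `k`-th product that does not see
the last compartment. Then `S_{m+1} = Σ_{k=1}^{m} q_k + q_m α_m/(γ+μ)`, and since
`q_{m+1} = q_m α_m/(α_{m+1}+μ)`,
`S_{m+2} - S_{m+1} = q_m α_m (α_{m+1}+γ+μ)/((α_{m+1}+μ)(γ+μ)) - q_m α_m/(γ+μ)
  = q_m α_m γ/((α_{m+1}+μ)(γ+μ)) > 0`.
-/

open Finset

/-- `SjSum α γ μ j` is the sum `S_j = Σ_{k=1}^{j} Π_{l=1}^{k} α_{l−1}/d^{(j)}_l` appearing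
under the square root in `R_0` for the model with `j` infected compartments, where
`d^{(j)}_l = α_l + μ` for `1 ≤ l ≤ j−1` and `d^{(j)}_j = γ + μ`. -/
noncomputable def SjSum (α : ℕ → ℝ) (γ μ : ℝ) (j : ℕ) : ℝ :=
  ∑ k ∈ Icc 1 j, ∏ l ∈ Icc 1 k, α (l - 1) / (if l = j then γ + μ else α l + μ)

namespace SjSum

variable {α : ℕ → ℝ} {γ μ : ℝ}

noncomputable def relapseWeight (α : ℕ → ℝ) (μ : ℝ) (k : ℕ) : ℝ :=
  ∏ l ∈ Icc 1 k, α (l - 1) / (α l + μ)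

theorem relapseWeight_succ (k : ℕ) :
    relapseWeight α μ (k + 1) = relapseWeight α μ k * (α k / (α (k + 1) + μ)) := by
  rw [relapseWeight, prod_Icc_succ_top (Nat.le_add_left 1 k), Nat.add_sub_cancel, relapseWeight]

theorem relapseWeight_pos (hμ : 0 ≤ μ) (hα : ∀ k, 0 < α k) (k : ℕ) :
    0 < relapseWeight α μ k :=
  prod_pos fun l _ ↦ div_pos (hα _) (by linarith [hα l])

theorem prod_eq_relapseWeight_of_le {k m : ℕ} (hk : k ≤ m) :
    ∏ l ∈ Icc 1 k, α (l - 1) / (if l = m + 1 then γ + μ else α l + μ) = relapseWeight α μ k :=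
  prod_congr rfl fun l hl ↦ by rw [if_neg (by grind)]

theorem eq_sum_relapseWeight_add (m : ℕ) :
    SjSum α γ μ (m + 1) =
      ∑ k ∈ Icc 1 m, relapseWeight α μ k + relapseWeight α μ m * (α m / (γ + μ)) := by
  rw [SjSum, sum_Icc_succ_top (Nat.le_add_left 1 m), prod_Icc_succ_top (Nat.le_add_left 1 m),
    if_pos rfl, Nat.add_sub_cancel, prod_eq_relapseWeight_of_le le_rfl]
  congr 1
  exact sum_congr rfl fun k hk ↦ prod_eq_relapseWeight_of_le (mem_Icc.mp hk).2

theorem pos (hγ : 0 < γ) (hμ : 0 ≤ μ) (hα : ∀ k, 0 < α k) {j : ℕ} (hj : 1 ≤ j) :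
    0 < SjSum α γ μ j := by
  refine sum_pos (fun k _ ↦ prod_pos fun l _ ↦ div_pos (hα _) ?_) ⟨1, mem_Icc.mpr ⟨le_rfl, hj⟩⟩
  split_ifs <;> linarith [hα l]

theorem lt_succ (hγ : 0 < γ) (hμ : 0 ≤ μ) (hα : ∀ k, 0 < α k) {j : ℕ} (hj : 1 ≤ j) :
    SjSum α γ μ j < SjSum α γ μ (j + 1) := by
  obtain ⟨m, rfl⟩ : ∃ m, j = m + 1 := ⟨j - 1, by omega⟩
  rw [eq_sum_relapseWeight_add, eq_sum_relapseWeight_add, sum_Icc_succ_top (by omega),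
    relapseWeight_succ]
  set a := relapseWeight α μ m * α m
  have ha : 0 < a := mul_pos (relapseWeight_pos hμ hα m) (hα m)
  have hx : 0 < α (m + 1) + μ := by linarith [hα (m + 1)]
  have hg : 0 < γ + μ := by linarith
  have hgap : relapseWeight α μ m * (α m / (α (m + 1) + μ))
        + relapseWeight α μ m * (α m / (α (m + 1) + μ)) * (α (m + 1) / (γ + μ))
        - relapseWeight α μ m * (α m / (γ + μ))
      = a * γ / ((α (m + 1) + μ) * (γ + μ)) := by
    field_simp
    ring
  have : 0 < a * γ / ((α (m + 1) + μ) * (γ + μ)) := by positivity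
  linarith

end SjSum

/-- `S_{j+1} > S_j` for every `j ≥ 1`; consequently, with equal death
rates in all infected compartments and all other parameters fixed, the basic reproduction
number `R_0 = f·√((c·c_v·S̄_v/(μ̃·S̄))·S_j)` strictly increases with the number of
relapses `j − 1`. -/
theorem stmt11 (γ μ : ℝ) (hγ : 0 < γ) (hμ : 0 < μ)
    (α : ℕ → ℝ) (hα0 : α 0 = 1) (hα : ∀ k, 1 ≤ k → 0 < α k)
    (f c cv Sb Sbv μt : ℝ) (hf : 0 < f) (hc : 0 < c) (hcv : 0 < cv)
    (hSb : 0 < Sb) (hSbv : 0 < Sbv) (hμt : 0 < μt) :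
    ∀ j : ℕ, 1 ≤ j →
      SjSum α γ μ j < SjSum α γ μ (j + 1) ∧
      f * Real.sqrt (c * cv * Sbv / (μt * Sb) * SjSum α γ μ j) <
        f * Real.sqrt (c * cv * Sbv / (μt * Sb) * SjSum α γ μ (j + 1)) := by
  intro j hj
  have hαpos : ∀ k, 0 < α k := fun k ↦
    k.eq_zero_or_pos.elim (fun hk ↦ hk ▸ hα0 ▸ one_pos) (hα k)
  have hlt := SjSum.lt_succ hγ hμ.le hαpos hj
  have hS := SjSum.pos hγ hμ.le hαpos hj
  refine ⟨hlt, ?_⟩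
  have hcoef : 0 < c * cv * Sbv / (μt * Sb) := by positivity
  gcongr
end

section
/- For every real λ, the determinant of the (j+1)×(j+1) matrix T(λ) equals p(λ) := Π_{i=1}^{j+1}(λ + ξ_i) − (f²·c·c_v·S̄_v/S̄)·Σ_{i=0}^{j−1} α_0·α_1⋯α_i·Π_{m=i+2}^{j}(λ + ξ_m). -/
/-!
Expand `det T(λ)` along its last column, which has only two nonzero entries. Deleting the last
row and column leaves a lower bidiagonal matrix, whose determinant is `Π_{i ≤ j} (λ + ξ_i)`.
Deleting the first row and last column leaves an upper bidiagonal matrix with diagonal `-α_i`,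
superdiagonal `λ + ξ_{i+1}` and constant last row `-f c S̄_v / S̄`; expanding it along the first
column inductively, the entry of the last row in column `l` contributes the product of the
diagonal entries before `l` times the superdiagonal entries after it.
-/

open Finset

section

variable {R : Type*} [CommRing R]

theorem det_upperBidiagonal_lastRow (n : ℕ) (a e : ℕ → R)
    (b : Fin (n + 1) → R) (M : Matrix (Fin (n + 1)) (Fin (n + 1)) R)
    (hM : ∀ (i : Fin n) (l : Fin (n + 1)), M i.castSucc l =
      if (l : ℕ) = i then a i else if (l : ℕ) = i + 1 then e i else 0)
    (hlast : M (Fin.last n) = b) :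
    M.det = ∑ l : Fin (n + 1),
      (-1) ^ (n + (l : ℕ)) * b l * (∏ r ∈ range l, a r) * ∏ r ∈ Ico (l : ℕ) n, e r := by
  induction n generalizing a e with
  | zero => simp [Matrix.det_unique, ← hlast]
  | succ n ih =>
    have hcol : ∀ i : Fin (n + 1 + 1), i ≠ 0 → i ≠ Fin.last (n + 1) → M i 0 = 0 := by
      intro i h0 hl
      obtain ⟨i, rfl⟩ := Fin.exists_castSucc_eq.mpr hl
      have : (i : ℕ) ≠ 0 := fun h => h0 (Fin.ext h)
      rw [hM, Fin.val_zero, if_neg (by omega), if_neg (by omega)]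
    have hminor : (M.submatrix Fin.succ Fin.succ).det = ∑ l : Fin (n + 1),
        (-1) ^ (n + (l : ℕ)) * b l.succ * (∏ r ∈ range l, a (r + 1)) *
          ∏ r ∈ Ico (l : ℕ) n, e (r + 1) := by
      refine ih (fun r => a (r + 1)) (fun r => e (r + 1)) (b ∘ Fin.succ) _ (fun i l => ?_) ?_
      · rw [Matrix.submatrix_apply, Fin.succ_castSucc, hM]
        simp
      · ext l; simp [← hlast]
    have hcorner : (M.submatrix Fin.castSucc Fin.succ).det = ∏ r ∈ range (n + 1), e r := by
      rw [Matrix.det_of_isLowerTriangular, ← Fin.prod_univ_eq_prod_range]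
      · simp [hM]
      · intro i l hil
        have : (i : ℕ) < l := hil
        simp only [Matrix.submatrix_apply, hM, Fin.val_succ]
        rw [if_neg (by omega), if_neg (by omega)]
    have h00 : M 0 0 = a 0 := by simpa using hM 0 0
    rw [Matrix.det_succ_column_zero,
      Fintype.sum_eq_add 0 (Fin.last (n + 1)) (by simp [Fin.ext_iff])
        (fun i ⟨h0, hl⟩ => by simp [hcol i h0 hl]), Fin.succAbove_zero, Fin.succAbove_last,
      hminor, hcorner, h00, hlast, mul_sum, add_comm]
    conv_rhs => rw [Fin.sum_univ_succ]
    simp only [Fin.val_zero, Fin.val_succ, Fin.val_last, pow_zero, one_mul, add_zero,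
      prod_range_zero, mul_one, ← range_eq_Ico]
    congr 1
    refine sum_congr rfl fun l _ => ?_
    rw [prod_range_succ', ← prod_Ico_add' e (l : ℕ) n 1]
    ring

/-- `T(λ)` with rows and columns shifted to start at `0`: `d i = λ + ξ_{i+1}`, `a l = α_{l+1}`,
`u = f c_v`, `v = f c S̄_v / S̄`. -/
def relapseMatrix (n : ℕ) (d a : ℕ → R) (u v : R) :
    Matrix (Fin (n + 1)) (Fin (n + 1)) R :=
  Matrix.of fun i l =>
    if i = l then d i
    else if (i : ℕ) = l + 1 ∧ (i : ℕ) ≤ n - 1 then -a l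
    else if (i : ℕ) = 0 ∧ (l : ℕ) = n then -u
    else if (i : ℕ) = n ∧ (l : ℕ) < n then -v
    else 0

theorem relapseMatrix_apply (n : ℕ) (d a : ℕ → R) (u v : R)
    (i l : Fin (n + 1)) : relapseMatrix n d a u v i l =
      if (i : ℕ) = l then d i
      else if (i : ℕ) = l + 1 ∧ (i : ℕ) ≤ n - 1 then -a l
      else if (i : ℕ) = 0 ∧ (l : ℕ) = n then -u
      else if (i : ℕ) = n ∧ (l : ℕ) < n then -v
      else 0 := by
  simp only [relapseMatrix, Matrix.of_apply, Fin.ext_iff]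

theorem det_relapseMatrix_submatrix_succ_castSucc (n : ℕ) (d a : ℕ → R) (u v : R) :
    ((relapseMatrix (n + 1) d a u v).submatrix Fin.succ Fin.castSucc).det =
      ∑ l : Fin (n + 1),
        (-1) ^ (n + (l : ℕ)) * -v * (∏ r ∈ range l, -a r) * ∏ r ∈ Ico (l : ℕ) n, d (r + 1) := by
  refine det_upperBidiagonal_lastRow n _ _ _ _ (fun i l => ?_) ?_
  · simp only [Matrix.submatrix_apply, relapseMatrix_apply, Fin.val_succ, Fin.val_castSucc]
    split_ifs <;> first | rfl | (exfalso; omega) | simp [*]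
  · ext l
    have := l.isLt
    simp only [Matrix.submatrix_apply, relapseMatrix_apply, Fin.val_succ, Fin.val_castSucc,
      Fin.val_last, true_and]
    split_ifs <;> first | rfl | (exfalso; omega)

theorem det_relapseMatrix_submatrix_castSucc_castSucc (n : ℕ) (d a : ℕ → R) (u v : R) :
    ((relapseMatrix (n + 1) d a u v).submatrix Fin.castSucc Fin.castSucc).det =
      ∏ i ∈ range (n + 1), d i := by
  rw [Matrix.det_of_isLowerTriangular, ← Fin.prod_univ_eq_prod_range]
  · simp [relapseMatrix_apply]
  · intro i l hil
    have : (i : ℕ) < l := hil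
    simp only [Matrix.submatrix_apply, relapseMatrix_apply, Fin.val_castSucc]
    split_ifs <;> first | rfl | (exfalso; omega)

theorem det_relapseMatrix (n : ℕ) (d a : ℕ → R) (u v : R) :
    (relapseMatrix n d a u v).det = ∏ i ∈ range (n + 1), d i -
      u * v * ∑ i ∈ range n, (∏ l ∈ range i, a l) * ∏ m ∈ Ico (i + 1) n, d m := by
  cases n with
  | zero => simp [Matrix.det_unique, relapseMatrix_apply]
  | succ n =>
    have hcol : ∀ i : Fin (n + 1 + 1), i ≠ 0 → i ≠ Fin.last (n + 1) →
        relapseMatrix (n + 1) d a u v i (Fin.last (n + 1)) = 0 := by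
      intro i h0 hl
      obtain ⟨i, rfl⟩ := Fin.exists_castSucc_eq.mpr hl
      have : (i : ℕ) ≠ 0 := fun h => h0 (Fin.ext h)
      have := i.isLt
      simp only [relapseMatrix_apply, Fin.val_castSucc, Fin.val_last]
      split_ifs <;> first | rfl | (exfalso; omega)
    have htop : relapseMatrix (n + 1) d a u v 0 (Fin.last (n + 1)) = -u := by simp [relapseMatrix_apply]
    have hbot : relapseMatrix (n + 1) d a u v (Fin.last (n + 1)) (Fin.last (n + 1)) =
        d (n + 1) := by simp [relapseMatrix_apply]
    have hterm : ∀ l ∈ range (n + 1), (-1) ^ (n + 1) * -u *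
        ((-1) ^ (n + l) * -v * (∏ r ∈ range l, -a r) * ∏ r ∈ Ico l n, d (r + 1)) =
        -(u * v * ((∏ r ∈ range l, a r) * ∏ m ∈ Ico (l + 1) (n + 1), d m)) := by
      intro l _
      have hsign : (-1 : R) ^ (n + 1) * (-1) ^ (n + l) * (-1) ^ l = -1 := by
        rw [← pow_add, ← pow_add, show n + 1 + (n + l) + l = 2 * (n + l) + 1 by ring, pow_succ,
          pow_mul]
        simp
      rw [prod_neg, card_range, prod_Ico_add' d l n 1]
      linear_combination u * v * (∏ r ∈ range l, a r) * (∏ m ∈ Ico (l + 1) (n + 1), d m) * hsign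
    rw [Matrix.det_succ_column _ (Fin.last (n + 1)), Fintype.sum_eq_add 0 (Fin.last (n + 1))
      (by simp [Fin.ext_iff]) (fun i ⟨h0, hl⟩ => by simp [hcol i h0 hl]), Fin.succAbove_zero,
      Fin.succAbove_last, det_relapseMatrix_submatrix_succ_castSucc,
      det_relapseMatrix_submatrix_castSucc_castSucc, htop, hbot]
    simp only [Fin.val_zero, Fin.val_last, zero_add, Even.neg_one_pow ⟨n + 1, rfl⟩, one_mul]
    rw [Fin.sum_univ_eq_sum_range (fun l => (-1) ^ (n + l) * -v * (∏ r ∈ range l, -a r) *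
      ∏ r ∈ Ico l n, d (r + 1)) (n + 1), mul_sum, sum_congr rfl hterm, sum_neg_distrib,
      prod_range_succ d (n + 1), mul_sum]
    ring

end

theorem stmt12_general (j : ℕ)
    (α : ℕ → ℝ) (f c cv Sb Sbv : ℝ)
    (hα0 : α 0 = 1)
    (ξ : ℕ → ℝ)
    (T : ℝ → Matrix (Fin (j + 1)) (Fin (j + 1)) ℝ)
    (hT : ∀ lam : ℝ, T lam = Matrix.of fun i l : Fin (j + 1) =>
      if i = l then lam + ξ ((i : ℕ) + 1)
      else if (i : ℕ) = (l : ℕ) + 1 ∧ (i : ℕ) ≤ j - 1 then -α ((l : ℕ) + 1)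
      else if (i : ℕ) = 0 ∧ (l : ℕ) = j then -(f * cv)
      else if (i : ℕ) = j ∧ (l : ℕ) < j then -(f * c * Sbv / Sb)
      else 0) :
    ∀ lam : ℝ,
      (T lam).det =
        ∏ i ∈ Icc 1 (j + 1), (lam + ξ i) -
          f ^ 2 * c * cv * Sbv / Sb *
            ∑ i ∈ range j, (∏ l ∈ Icc 0 i, α l) * ∏ m ∈ Icc (i + 2) j, (lam + ξ m) := by
  intro lam
  have hTeq : T lam = relapseMatrix j (fun i => lam + ξ (i + 1)) (fun l => α (l + 1))
      (f * cv) (f * c * Sbv / Sb) := hT lam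
  have hαprod : ∀ i, ∏ l ∈ Icc 0 i, α l = ∏ l ∈ range i, α (l + 1) := fun i => by
    rw [← Nat.range_succ_eq_Icc_zero, prod_range_succ', hα0, mul_one]
  rw [hTeq, det_relapseMatrix]
  simp only [hαprod]
  simp only [← Ico_add_one_right_eq_Icc, range_eq_Ico, prod_Ico_add' (fun i => lam + ξ i)]
  ring

/-- The determinant of the `(j+1)×(j+1)` matrix `T(λ)` (the
infected-and-vector block of the Jacobian of the relapsing host–vector model at the
disease-free equilibrium, shifted by `λ`) equals
`p(λ) = Π_{i=1}^{j+1}(λ+ξ_i) − (f²·c·c_v·S̄_v/S̄)·Σ_{i=0}^{j−1} α_0⋯α_i·Π_{m=i+2}^{j}(λ+ξ_m)`.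
(Rows/columns are 0-indexed: `i : Fin (j+1)` is the 1-indexed row `i+1`.) -/
theorem stmt12 (j : ℕ) (hj : 1 ≤ j)
    (α μ : ℕ → ℝ) (γ μt f c cv Sb Sbv : ℝ)
    (hα0 : α 0 = 1)
    (hα : ∀ i, 1 ≤ i → i ≤ j - 1 → 0 < α i)
    (hμ : ∀ i, 1 ≤ i → i ≤ j → 0 < μ i)
    (hγ : 0 < γ) (hμt : 0 < μt) (hf : 0 < f) (hc : 0 < c) (hcv : 0 < cv)
    (hSb : 0 < Sb) (hSbv : 0 < Sbv)
    (ξ : ℕ → ℝ)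
    (hξ : ∀ i, 1 ≤ i → i ≤ j - 1 → ξ i = α i + μ i)
    (hξj : ξ j = γ + μ j) (hξj1 : ξ (j + 1) = μt)
    (T : ℝ → Matrix (Fin (j + 1)) (Fin (j + 1)) ℝ)
    (hT : ∀ lam : ℝ, T lam = Matrix.of fun i l : Fin (j + 1) =>
      if i = l then lam + ξ ((i : ℕ) + 1)
      else if (i : ℕ) = (l : ℕ) + 1 ∧ (i : ℕ) ≤ j - 1 then -α ((l : ℕ) + 1)
      else if (i : ℕ) = 0 ∧ (l : ℕ) = j then -(f * cv)
      else if (i : ℕ) = j ∧ (l : ℕ) < j then -(f * c * Sbv / Sb)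
      else 0) :
    ∀ lam : ℝ,
      (T lam).det =
        ∏ i ∈ Icc 1 (j + 1), (lam + ξ i) -
          f ^ 2 * c * cv * Sbv / Sb *
            ∑ i ∈ range j, (∏ l ∈ Icc 0 i, α l) * ∏ m ∈ Icc (i + 2) j, (lam + ξ m) :=
  stmt12_general j α f c cv Sb Sbv hα0 ξ T hT
end

section
/- The constant term of p satisfies p(0) = (1 − R_0²)·Π_{i=1}^{j+1} ξ_i. In particular, since all ξ_i > 0, p(0) = 0 if and only if R_0 = 1. -/
/-!
Evaluating `p` at `0` leaves `Π ξ_i` minus the weighted sum `Σ_i α_0⋯α_i · ξ_{i+2}⋯ξ_j`.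
Multiplying the sum defining `R_0²` by `ξ_1⋯ξ_{j+1}` turns each summand
`α_0⋯α_{k-1} / (ξ_1⋯ξ_k)` into `α_0⋯α_{k-1} · ξ_{k+1}⋯ξ_j · ξ_{j+1}`, so that weighted sum is
exactly `R_0² · Π ξ_i`. As `Π ξ_i > 0` and `R_0 > 0`, `p(0) = 0` forces `R_0² = 1`, i.e. `R_0 = 1`.
-/

open Finset

theorem prod_Icc_one_mul_prod_Icc_add_two {M : Type*} [CommMonoid M] (ξ : ℕ → M) {i j : ℕ}
    (hij : i < j) :
    (∏ l ∈ Icc 1 (i + 1), ξ l) * ∏ m ∈ Icc (i + 2) j, ξ m = ∏ l ∈ Icc 1 j, ξ l := by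
  have h := prod_Ioc_consecutive ξ (Nat.zero_le (i + 1)) hij
  rwa [← Icc_add_one_left_eq_Ioc, ← Icc_add_one_left_eq_Ioc, ← Icc_add_one_left_eq_Ioc] at h

theorem sum_div_prod_Icc_mul_prod_Icc {K : Type*} [Field K] (a ξ : ℕ → K) (j : ℕ)
    (hξ : ∀ l ∈ Icc 1 j, ξ l ≠ 0) :
    (∑ k ∈ Icc 1 j, a (k - 1) / ∏ l ∈ Icc 1 k, ξ l) * ∏ l ∈ Icc 1 j, ξ l =
      ∑ i ∈ range j, a i * ∏ m ∈ Icc (i + 2) j, ξ m := by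
  rw [sum_mul, ← Ico_add_one_right_eq_Icc, sum_Ico_eq_sum_range, Nat.add_sub_cancel]
  refine sum_congr rfl fun i hi => ?_
  have hij : i < j := mem_range.mp hi
  have hne : ∏ l ∈ Icc 1 (i + 1), ξ l ≠ 0 :=
    prod_ne_zero_iff.mpr fun l hl => hξ l (Icc_subset_Icc_right hij hl)
  rw [add_comm 1 i, Nat.add_sub_cancel, Ico_add_one_right_eq_Icc,
    ← prod_Icc_one_mul_prod_Icc_add_two ξ hij]
  field_simp

theorem one_sub_sq_mul_eq_zero_iff {K : Type*} [Field K] [LinearOrder K] [IsStrictOrderedRing K]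
    {r P : K} (hr : 0 ≤ r) (hP : P ≠ 0) :
    (1 - r ^ 2) * P = 0 ↔ r = 1 := by
  rw [mul_eq_zero, or_iff_left hP, sub_eq_zero, eq_comm, pow_eq_one_iff_of_nonneg hr two_ne_zero]

theorem stmt13_general (j : ℕ)
    (α μ : ℕ → ℝ) (γ μt f c cv Sb Sbv R0 : ℝ)
    (hα : ∀ i, 1 ≤ i → i ≤ j - 1 → 0 < α i)
    (hμ : ∀ i, 1 ≤ i → i ≤ j → 0 < μ i)
    (hγ : 0 < γ) (hμt : 0 < μt)
    (ξ : ℕ → ℝ)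
    (hξ : ∀ i, 1 ≤ i → i ≤ j - 1 → ξ i = α i + μ i)
    (hξj : ξ j = γ + μ j) (hξj1 : ξ (j + 1) = μt)
    (hR0 : 0 < R0)
    (hR0sq : R0 ^ 2 = f ^ 2 * c * cv * Sbv / (Sb * ξ (j + 1)) *
      ∑ k ∈ Icc 1 j, (∏ l ∈ Icc 0 (k - 1), α l) / ∏ l ∈ Icc 1 k, ξ l)
    (p : ℝ → ℝ)
    (hp : ∀ lam : ℝ, p lam =
      ∏ i ∈ Icc 1 (j + 1), (lam + ξ i) -
        f ^ 2 * c * cv * Sbv / Sb *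
          ∑ i ∈ range j, (∏ l ∈ Icc 0 i, α l) * ∏ m ∈ Icc (i + 2) j, (lam + ξ m)) :
    p 0 = (1 - R0 ^ 2) * ∏ i ∈ Icc 1 (j + 1), ξ i ∧ (p 0 = 0 ↔ R0 = 1) := by
  have hξpos : ∀ i ∈ Icc 1 (j + 1), 0 < ξ i := by
    intro i hi
    obtain ⟨hi1, hij1⟩ := mem_Icc.mp hi
    rcases lt_trichotomy i j with hlt | rfl | hgt
    · rw [hξ i hi1 (by omega)]
      exact add_pos (hα i hi1 (by omega)) (hμ i hi1 hlt.le)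
    · rw [hξj]; exact add_pos hγ (hμ i hi1 le_rfl)
    · rw [show i = j + 1 by omega, hξj1]; exact hμt
  have hprod : 0 < ∏ i ∈ Icc 1 (j + 1), ξ i := prod_pos hξpos
  have hξne : ∀ l ∈ Icc 1 j, ξ l ≠ 0 := fun l hl =>
    (hξpos l (Icc_subset_Icc_right j.le_succ hl)).ne'
  have hp0 : p 0 = (1 - R0 ^ 2) * ∏ i ∈ Icc 1 (j + 1), ξ i := by
    have hlast : ξ (j + 1) ≠ 0 := (hξpos (j + 1) (right_mem_Icc.mpr (by omega))).ne'
    simp only [hp 0, zero_add]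
    rw [hR0sq, ← sum_div_prod_Icc_mul_prod_Icc _ ξ j hξne, prod_Icc_succ_top (by omega)]
    field_simp
  exact ⟨hp0, hp0 ▸ one_sub_sq_mul_eq_zero_iff hR0.le hprod.ne'⟩

/-- The constant term of the characteristic polynomial
`p(λ) = Π_{i=1}^{j+1}(λ+ξ_i) − (f²·c·c_v·S̄_v/S̄)·Σ_{i=0}^{j−1} α_0⋯α_i·Π_{m=i+2}^{j}(λ+ξ_m)`
satisfies `p(0) = (1 − R_0²)·Π_{i=1}^{j+1} ξ_i`; in particular `p(0) = 0 ↔ R_0 = 1`. -/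
theorem stmt13 (j : ℕ) (hj : 1 ≤ j)
    (α μ : ℕ → ℝ) (γ μt f c cv Sb Sbv R0 : ℝ)
    (hα0 : α 0 = 1)
    (hα : ∀ i, 1 ≤ i → i ≤ j - 1 → 0 < α i)
    (hμ : ∀ i, 1 ≤ i → i ≤ j → 0 < μ i)
    (hγ : 0 < γ) (hμt : 0 < μt) (hf : 0 < f) (hc : 0 < c) (hcv : 0 < cv)
    (hSb : 0 < Sb) (hSbv : 0 < Sbv)
    (ξ : ℕ → ℝ)
    (hξ : ∀ i, 1 ≤ i → i ≤ j - 1 → ξ i = α i + μ i)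
    (hξj : ξ j = γ + μ j) (hξj1 : ξ (j + 1) = μt)
    (hR0 : 0 < R0)
    (hR0sq : R0 ^ 2 = f ^ 2 * c * cv * Sbv / (Sb * ξ (j + 1)) *
      ∑ k ∈ Icc 1 j, (∏ l ∈ Icc 0 (k - 1), α l) / ∏ l ∈ Icc 1 k, ξ l)
    (p : ℝ → ℝ)
    (hp : ∀ lam : ℝ, p lam =
      ∏ i ∈ Icc 1 (j + 1), (lam + ξ i) -
        f ^ 2 * c * cv * Sbv / Sb *
          ∑ i ∈ range j, (∏ l ∈ Icc 0 i, α l) * ∏ m ∈ Icc (i + 2) j, (lam + ξ m)) :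
    p 0 = (1 - R0 ^ 2) * ∏ i ∈ Icc 1 (j + 1), ξ i ∧ (p 0 = 0 ↔ R0 = 1) :=
  stmt13_general j α μ γ μt f c cv Sb Sbv R0 hα hμ hγ hμt ξ hξ hξj hξj1 hR0 hR0sq p hp
end

section
/- Let v ∈ ℝ^{j+1} satisfy vᵀ·T(0) = 0. If v_1 = 0 and v_{j+1} = 0, then v = 0. In other words, every nonzero left null vector of T(0) has a nonzero first or last component. -/
/-! Every column of `T(0)` other than the last one is lower triangular: its only entries are
the diagonal `ξ_l > 0`, the subdiagonal `-α_l` and the last row. So once `v_{j+1} = 0`, the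
column equations of `vᵀ T(0) = 0`, read from the last one backwards, force `v_j = ⋯ = v_1 = 0`. -/

namespace Matrix

variable {ι K : Type*} [Fintype ι] [LinearOrder ι] [Field K]

theorem eq_zero_of_vecMul_eq_zero_of_columns_lowerTriangular (M : Matrix ι ι K) (t : ι)
    (hlower : ∀ i l, i < l → l ≠ t → M i l = 0) (hdiag : ∀ l, l ≠ t → M l l ≠ 0)
    {v : ι → K} (hv : vecMul v M = 0) (ht : v t = 0) : v = 0 := by
  refine funext fun l => ?_
  induction l using WellFoundedGT.induction with
  | _ l ih =>
    by_cases hlt : l = t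
    · rw [hlt, ht, Pi.zero_apply]
    have hcol : ∑ i, v i * M i l = v l * M l l :=
      Fintype.sum_eq_single l fun i hil => by
        rcases hil.lt_or_gt with hi | hi
        · rw [hlower i l hi hlt, mul_zero]
        · rw [ih i hi, Pi.zero_apply, zero_mul]
    have hzero : v l * M l l = 0 := by
      rw [← hcol]; exact congrFun hv l
    exact (mul_eq_zero.mp hzero).resolve_right (hdiag l hlt)

end Matrix

theorem stmt15_general (j : ℕ)
    (α μ : ℕ → ℝ) (γ f c cv Sb Sbv : ℝ)
    (hα : ∀ i, 1 ≤ i → i ≤ j - 1 → 0 < α i)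
    (hμ : ∀ i, 1 ≤ i → i ≤ j → 0 < μ i)
    (hγ : 0 < γ)
    (ξ : ℕ → ℝ)
    (hξ : ∀ i, 1 ≤ i → i ≤ j - 1 → ξ i = α i + μ i)
    (hξj : ξ j = γ + μ j)
    (T0 : Matrix (Fin (j + 1)) (Fin (j + 1)) ℝ)
    (hT0 : T0 = Matrix.of fun i l : Fin (j + 1) =>
      if i = l then ξ ((i : ℕ) + 1)
      else if (i : ℕ) = (l : ℕ) + 1 ∧ (i : ℕ) ≤ j - 1 then -α ((l : ℕ) + 1)
      else if (i : ℕ) = 0 ∧ (l : ℕ) = j then -(f * cv)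
      else if (i : ℕ) = j ∧ (l : ℕ) < j then -(f * c * Sbv / Sb)
      else 0)
    (v : Fin (j + 1) → ℝ) (hv : Matrix.vecMul v T0 = 0)
    (hlast : v (Fin.last j) = 0) :
    v = 0 := by
  have hξpos : ∀ l, l < j → 0 < ξ (l + 1) := by
    intro l hl
    rcases (show l + 1 ≤ j by omega).eq_or_lt with h | h
    · rw [h, hξj]; linarith [hμ j (by omega) le_rfl]
    · rw [hξ (l + 1) (by omega) (by omega)]
      linarith [hα (l + 1) (by omega) (by omega), hμ (l + 1) (by omega) (by omega)]
  refine T0.eq_zero_of_vecMul_eq_zero_of_columns_lowerTriangular (Fin.last j) ?_ ?_ hv hlast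
  · intro i l (hil : (i : ℕ) < l) hl
    have := Fin.val_lt_last hl
    subst hT0
    simp only [Matrix.of_apply]
    split_ifs <;> first | omega | rfl
  · intro l hl
    subst hT0
    simpa using (hξpos l (Fin.val_lt_last hl)).ne'

/-- Every left null vector of `T(0)` (the negative of the infected
block of the Jacobian of the relapsing host–vector model at the disease-free
equilibrium) whose first and last components vanish is the zero vector; equivalently,
every nonzero left null vector of `T(0)` has a nonzero first or last component.
(Rows/columns are 0-indexed: `i : Fin (j+1)` is the 1-indexed row `i+1`.) -/
theorem stmt15 (j : ℕ) (hj : 1 ≤ j)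
    (α μ : ℕ → ℝ) (γ μt f c cv Sb Sbv : ℝ)
    (hα : ∀ i, 1 ≤ i → i ≤ j - 1 → 0 < α i)
    (hμ : ∀ i, 1 ≤ i → i ≤ j → 0 < μ i)
    (hγ : 0 < γ) (hμt : 0 < μt) (hf : 0 < f) (hc : 0 < c) (hcv : 0 < cv)
    (hSb : 0 < Sb) (hSbv : 0 < Sbv)
    (ξ : ℕ → ℝ)
    (hξ : ∀ i, 1 ≤ i → i ≤ j - 1 → ξ i = α i + μ i)
    (hξj : ξ j = γ + μ j) (hξj1 : ξ (j + 1) = μt)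
    (T0 : Matrix (Fin (j + 1)) (Fin (j + 1)) ℝ)
    (hT0 : T0 = Matrix.of fun i l : Fin (j + 1) =>
      if i = l then ξ ((i : ℕ) + 1)
      else if (i : ℕ) = (l : ℕ) + 1 ∧ (i : ℕ) ≤ j - 1 then -α ((l : ℕ) + 1)
      else if (i : ℕ) = 0 ∧ (l : ℕ) = j then -(f * cv)
      else if (i : ℕ) = j ∧ (l : ℕ) < j then -(f * c * Sbv / Sb)
      else 0)
    (v : Fin (j + 1) → ℝ) (hv : Matrix.vecMul v T0 = 0)
    (h1 : v 0 = 0) (hlast : v (Fin.last j) = 0) :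
    v = 0 :=
  stmt15_general j α μ γ f c cv Sb Sbv hα hμ hγ ξ hξ hξj T0 hT0 v hv hlast
end

section
/- Suppose R_0 = 1 and let v, w ∈ ℝ^{j+1} be componentwise nonnegative vectors with vᵀ·T(0) = 0, T(0)·w = 0, and v·w = 1. Then the bifurcation coefficients satisfy: b := f·(v_1·w_{j+1}·c_v + v_{j+1}·(c·S̄_v/S̄)·Σ_{k=1}^{j} w_k) > 0 (in particular b ≠ 0), and a := −(f²·c_v²/(S̄·μ_s) + f²·c²·S̄_v/(S̄²·μ̃_s))·(Σ_{i=1}^{j+1} v_i)·(Σ_{k=1}^{j+1} w_k)² < 0. -/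
/-!
The linearisation `T(0)` has nonpositive off-diagonal entries, and its negative entries link
the compartments in one cycle `1 → 2 → ⋯ → j+1 → 1`. For a nonnegative null vector of such a
matrix, a zero coordinate forces zeros at its neighbours on the cycle, so a nonzero nonnegative
left or right null vector is strictly positive (Perron–Frobenius for an irreducible matrix).
Since `v·w = 1`, neither `v` nor `w` vanishes, and both signs follow at once.
-/

open Finset

namespace Fin

theorem forall_of_succ_imp_castSucc {n : ℕ} {P : Fin (n + 1) → Prop}
    (hstep : ∀ l : Fin n, P l.succ → P l.castSucc) (hwrap : P 0 → P (last n))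
    {k : Fin (n + 1)} (hk : P k) (i : Fin (n + 1)) : P i := by
  have hzero : ∀ i, P i → P 0 :=
    Fin.induction (motive := fun i => P i → P 0) id fun l ih h => ih (hstep l h)
  exact Fin.reverseInduction (hwrap (hzero k hk)) hstep i

theorem forall_of_castSucc_imp_succ {n : ℕ} {P : Fin (n + 1) → Prop}
    (hstep : ∀ l : Fin n, P l.castSucc → P l.succ) (hwrap : P (last n) → P 0)
    {k : Fin (n + 1)} (hk : P k) (i : Fin (n + 1)) : P i := by
  have := forall_of_succ_imp_castSucc (P := fun i => P i.rev)
    (fun l h => by simpa [rev_castSucc] using hstep l.rev (by simpa [rev_succ] using h))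
    (by simpa using hwrap) (k := k.rev) (by simpa using hk) i.rev
  simpa using this

end Fin

namespace Matrix

def IsZMatrix {n R : Type*} [Zero R] [LE R] (T : Matrix n n R) : Prop :=
  ∀ i l, i ≠ l → T i l ≤ 0

theorem IsZMatrix.transpose {n R : Type*} [Zero R] [LE R] {T : Matrix n n R}
    (hT : T.IsZMatrix) : Tᵀ.IsZMatrix :=
  fun i l hil => hT l i hil.symm

section

variable {n R : Type*} [Fintype n] [CommRing R] [LinearOrder R] [IsStrictOrderedRing R]
  {T : Matrix n n R}

/-- In row `i` of `T *ᵥ w = 0` with `w i = 0`, every term `T i l * w l` is nonpositive, so all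
of them vanish. -/
theorem IsZMatrix.eq_zero_of_mulVec_eq_zero (hT : T.IsZMatrix) {w : n → R} (hw : 0 ≤ w)
    (hTw : T *ᵥ w = 0) {i l : n} (hwi : w i = 0) (hil : T i l < 0) : w l = 0 := by
  have hterm : ∀ k ∈ univ, T i k * w k ≤ 0 := fun k _ => by
    rcases eq_or_ne i k with rfl | hik
    · simp [hwi]
    · exact mul_nonpos_of_nonpos_of_nonneg (hT i k hik) (hw k)
  have hrow : ∑ k, T i k * w k = 0 := congrFun hTw i
  have := (sum_eq_zero_iff_of_nonpos hterm).1 hrow l (mem_univ l)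
  exact (mul_eq_zero.1 this).resolve_left hil.ne

theorem IsZMatrix.eq_zero_of_vecMul_eq_zero (hT : T.IsZMatrix) {v : n → R} (hv : 0 ≤ v)
    (hvT : v ᵥ* T = 0) {i l : n} (hvl : v l = 0) (hil : T i l < 0) : v i = 0 :=
  hT.transpose.eq_zero_of_mulVec_eq_zero hv ((mulVec_transpose T v).trans hvT) hvl hil

end

section

variable {R : Type*} [CommRing R] [LinearOrder R] [IsStrictOrderedRing R] {m : ℕ}
  {T : Matrix (Fin (m + 1)) (Fin (m + 1)) R}

theorem IsZMatrix.pos_of_mulVec_eq_zero (hT : T.IsZMatrix)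
    (hsub : ∀ l : Fin m, T l.succ l.castSucc < 0) (hcorner : T 0 (Fin.last m) < 0)
    {w : Fin (m + 1) → R} (hw : 0 ≤ w) (hTw : T *ᵥ w = 0) (hw0 : w ≠ 0) (i : Fin (m + 1)) :
    0 < w i := by
  refine (hw i).lt_of_ne' fun hwi => hw0 (funext fun l => ?_)
  exact Fin.forall_of_succ_imp_castSucc (P := fun k => w k = 0)
    (fun l h => hT.eq_zero_of_mulVec_eq_zero hw hTw h (hsub l))
    (fun h => hT.eq_zero_of_mulVec_eq_zero hw hTw h hcorner) hwi l

theorem IsZMatrix.pos_of_vecMul_eq_zero (hT : T.IsZMatrix)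
    (hsub : ∀ l : Fin m, T l.succ l.castSucc < 0) (hcorner : T 0 (Fin.last m) < 0)
    {v : Fin (m + 1) → R} (hv : 0 ≤ v) (hvT : v ᵥ* T = 0) (hv0 : v ≠ 0) (i : Fin (m + 1)) :
    0 < v i := by
  refine (hv i).lt_of_ne' fun hvi => hv0 (funext fun l => ?_)
  exact Fin.forall_of_castSucc_imp_succ (P := fun k => v k = 0)
    (fun l h => hT.eq_zero_of_vecMul_eq_zero hv hvT h (hsub l))
    (fun h => hT.eq_zero_of_vecMul_eq_zero hv hvT h hcorner) hvi l

end

end Matrix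

/-- The matrix `T(0)`, with `p = f c_v` and `q = f c S̄_v / S̄`; index `i : Fin (j + 1)` is the
paper's compartment `i + 1`. -/
def relapseJacobian (j : ℕ) (α ξ : ℕ → ℝ) (p q : ℝ) : Matrix (Fin (j + 1)) (Fin (j + 1)) ℝ :=
  Matrix.of fun i l : Fin (j + 1) =>
    if i = l then ξ ((i : ℕ) + 1)
    else if (i : ℕ) = (l : ℕ) + 1 ∧ (i : ℕ) ≤ j - 1 then -α ((l : ℕ) + 1)
    else if (i : ℕ) = 0 ∧ (l : ℕ) = j then -p
    else if (i : ℕ) = j ∧ (l : ℕ) < j then -q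
    else 0

section

variable {j : ℕ} {α ξ : ℕ → ℝ} {p q : ℝ}

theorem relapseJacobian_nonpos_of_ne (hα : ∀ i, 1 ≤ i → i ≤ j - 1 → 0 ≤ α i) (hp : 0 ≤ p)
    (hq : 0 ≤ q) {i l : Fin (j + 1)} (hil : i ≠ l) : relapseJacobian j α ξ p q i l ≤ 0 := by
  simp only [relapseJacobian, Matrix.of_apply, if_neg hil]
  split_ifs
  · exact neg_nonpos.2 (hα _ (by omega) (by omega))
  all_goals linarith

theorem relapseJacobian_succ_castSucc_neg (hα : ∀ i, 1 ≤ i → i ≤ j - 1 → 0 < α i) (hq : 0 < q)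
    (l : Fin j) : relapseJacobian j α ξ p q l.succ l.castSucc < 0 := by
  have hne : l.succ ≠ l.castSucc := (Fin.castSucc_lt_succ (i := l)).ne'
  simp only [relapseJacobian, Matrix.of_apply, if_neg hne, Fin.val_succ, Fin.val_castSucc,
    true_and]
  split_ifs
  · exact neg_neg_of_pos (hα _ (by omega) (by omega))
  all_goals have := l.isLt; first | omega | linarith

theorem relapseJacobian_zero_last_neg (hj : 1 ≤ j) (hp : 0 < p) :
    relapseJacobian j α ξ p q 0 (Fin.last j) < 0 := by
  have hne : (0 : Fin (j + 1)) ≠ Fin.last j :=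
    Fin.ne_of_val_ne (by rw [Fin.val_zero, Fin.val_last]; omega)
  simpa [relapseJacobian, hne] using hp

end

theorem stmt16_general (j : ℕ) (hj : 1 ≤ j)
    (α : ℕ → ℝ) (f c cv Sb Sbv μs μts : ℝ)
    (hα : ∀ i, 1 ≤ i → i ≤ j - 1 → 0 < α i)
    (hf : 0 < f) (hc : 0 < c) (hcv : 0 < cv)
    (hSb : 0 < Sb) (hSbv : 0 < Sbv) (hμs : 0 < μs) (hμts : 0 < μts)
    (ξ : ℕ → ℝ)
    (T0 : Matrix (Fin (j + 1)) (Fin (j + 1)) ℝ)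
    (hT0 : T0 = Matrix.of fun i l : Fin (j + 1) =>
      if i = l then ξ ((i : ℕ) + 1)
      else if (i : ℕ) = (l : ℕ) + 1 ∧ (i : ℕ) ≤ j - 1 then -α ((l : ℕ) + 1)
      else if (i : ℕ) = 0 ∧ (l : ℕ) = j then -(f * cv)
      else if (i : ℕ) = j ∧ (l : ℕ) < j then -(f * c * Sbv / Sb)
      else 0)
    (v w : Fin (j + 1) → ℝ)
    (hvnonneg : ∀ i, 0 ≤ v i) (hwnonneg : ∀ i, 0 ≤ w i)
    (hv : Matrix.vecMul v T0 = 0) (hw : T0.mulVec w = 0)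
    (hvw : dotProduct v w = 1) :
    0 < f * (v 0 * w (Fin.last j) * cv +
        v (Fin.last j) * (c * Sbv / Sb) *
          ∑ i ∈ univ.filter (fun i : Fin (j + 1) => (i : ℕ) < j), w i) ∧
    -((f ^ 2 * cv ^ 2 / (Sb * μs) + f ^ 2 * c ^ 2 * Sbv / (Sb ^ 2 * μts)) *
        (∑ i, v i) * (∑ i, w i) ^ 2) < 0 := by
  have hq : 0 < f * c * Sbv / Sb := by positivity
  replace hT0 : T0 = relapseJacobian j α ξ (f * cv) (f * c * Sbv / Sb) := hT0
  subst hT0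
  have hZ : (relapseJacobian j α ξ (f * cv) (f * c * Sbv / Sb)).IsZMatrix := fun _ _ =>
    relapseJacobian_nonpos_of_ne (fun i h1 h2 => (hα i h1 h2).le) (by positivity) hq.le
  have hsub := relapseJacobian_succ_castSucc_neg (ξ := ξ) (p := f * cv) hα hq
  have hcorner := relapseJacobian_zero_last_neg (α := α) (ξ := ξ) (q := f * c * Sbv / Sb) hj
    (mul_pos hf hcv)
  have hv0 : v ≠ 0 := by rintro rfl; simp at hvw
  have hw0 : w ≠ 0 := by rintro rfl; simp at hvw
  have hvpos := hZ.pos_of_vecMul_eq_zero hsub hcorner hvnonneg hv hv0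
  have hwpos := hZ.pos_of_mulVec_eq_zero hsub hcorner hwnonneg hw hw0
  constructor
  · refine mul_pos hf (add_pos_of_pos_of_nonneg (mul_pos (mul_pos (hvpos 0) (hwpos _)) hcv) ?_)
    exact mul_nonneg (mul_nonneg (hvnonneg _) (by positivity)) (sum_nonneg fun i _ => hwnonneg i)
  · have := sum_pos (fun i _ => hvpos i) univ_nonempty
    have := sum_pos (fun i _ => hwpos i) univ_nonempty
    exact neg_neg_of_pos (by positivity)

/-- At `R_0 = 1`, for componentwise nonnegative left/right null
vectors `v, w` of `T(0)` normalized by `v·w = 1`, the van den Driessche–Watmough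
bifurcation coefficients of the relapsing host–vector model satisfy
`b = f·(v_1·w_{j+1}·c_v + v_{j+1}·(c·S̄_v/S̄)·Σ_{k=1}^{j} w_k) > 0` (in particular
`b ≠ 0`) and
`a = −(f²·c_v²/(S̄·μ_s) + f²·c²·S̄_v/(S̄²·μ̃_s))·(Σ_i v_i)·(Σ_k w_k)² < 0`.
(Rows/columns are 0-indexed: `i : Fin (j+1)` is the 1-indexed row `i+1`.) -/
theorem stmt16 (j : ℕ) (hj : 1 ≤ j)
    (α μ : ℕ → ℝ) (γ μt f c cv Sb Sbv μs μts R0 : ℝ)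
    (hα0 : α 0 = 1)
    (hα : ∀ i, 1 ≤ i → i ≤ j - 1 → 0 < α i)
    (hμ : ∀ i, 1 ≤ i → i ≤ j → 0 < μ i)
    (hγ : 0 < γ) (hμt : 0 < μt) (hf : 0 < f) (hc : 0 < c) (hcv : 0 < cv)
    (hSb : 0 < Sb) (hSbv : 0 < Sbv) (hμs : 0 < μs) (hμts : 0 < μts)
    (ξ : ℕ → ℝ)
    (hξ : ∀ i, 1 ≤ i → i ≤ j - 1 → ξ i = α i + μ i)
    (hξj : ξ j = γ + μ j) (hξj1 : ξ (j + 1) = μt)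
    (hR0 : 0 < R0)
    (hR0sq : R0 ^ 2 = f ^ 2 * c * cv * Sbv / (Sb * ξ (j + 1)) *
      ∑ k ∈ Icc 1 j, (∏ l ∈ Icc 0 (k - 1), α l) / ∏ l ∈ Icc 1 k, ξ l)
    (hR0one : R0 = 1)
    (T0 : Matrix (Fin (j + 1)) (Fin (j + 1)) ℝ)
    (hT0 : T0 = Matrix.of fun i l : Fin (j + 1) =>
      if i = l then ξ ((i : ℕ) + 1)
      else if (i : ℕ) = (l : ℕ) + 1 ∧ (i : ℕ) ≤ j - 1 then -α ((l : ℕ) + 1)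
      else if (i : ℕ) = 0 ∧ (l : ℕ) = j then -(f * cv)
      else if (i : ℕ) = j ∧ (l : ℕ) < j then -(f * c * Sbv / Sb)
      else 0)
    (v w : Fin (j + 1) → ℝ)
    (hvnonneg : ∀ i, 0 ≤ v i) (hwnonneg : ∀ i, 0 ≤ w i)
    (hv : Matrix.vecMul v T0 = 0) (hw : T0.mulVec w = 0)
    (hvw : dotProduct v w = 1) :
    0 < f * (v 0 * w (Fin.last j) * cv +
        v (Fin.last j) * (c * Sbv / Sb) *
          ∑ i ∈ univ.filter (fun i : Fin (j + 1) => (i : ℕ) < j), w i) ∧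
    -((f ^ 2 * cv ^ 2 / (Sb * μs) + f ^ 2 * c ^ 2 * Sbv / (Sb ^ 2 * μts)) *
        (∑ i, v i) * (∑ i, w i) ^ 2) < 0 :=
  stmt16_general j hj α f c cv Sb Sbv μs μts hα hf hc hcv hSb hSbv hμs hμts ξ T0 hT0 v w hvnonneg
    hwnonneg hv hw hvw
end

section
/- Let j ≥ 2 and let α_1, …, α_{j−1}, μ_1, …, μ_j, γ be positive reals with α_0 = 1. For θ = (θ_1, …, θ_{j−1}) with all θ_i ≥ 0, define G(θ) = Σ_{k=1}^{j} Π_{l=1}^{k} α_{l−1}/d_l(θ), where d_l(θ) = α_l + μ_l + θ_l for 1 ≤ l ≤ j−1 and d_j(θ) = γ + μ_j. If θ ≤ θ' componentwise and θ_i < θ'_i for some i, then G(θ') < G(θ). Consequently, in the relapsing model with removal to the recovered compartment, the basic reproduction number R_0 = f·√((c·c_v·S̄_v/(μ̃·S̄))·G(θ)) strictly decreases when any removal (treatment) rate θ_i is increased. -/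
/-!
Every factor `α_{l−1}/d_l(θ)` of `G(θ)` is positive and antitone in `θ`, strictly so in `θ_l`
for `l < j`. The last summand of `G` is the product of all `j` factors, so it decreases strictly
when some `θ_i` increases, while every other summand decreases weakly. Composing with the strictly
increasing map `x ↦ f·√(C·x)` gives the claim about `R_0`.
-/

open Finset

/-- `Gθ j α μ γ θ` is the sum `G(θ) = Σ_{k=1}^{j} Π_{l=1}^{k} α_{l−1}/d_l(θ)` appearing
under the square root in `R_0` for the relapsing model with removal rates `θ`, where
`d_l(θ) = α_l + μ_l + θ_l` for `1 ≤ l ≤ j−1` and `d_j(θ) = γ + μ_j`. -/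
noncomputable def Gθ (j : ℕ) (α μ : ℕ → ℝ) (γ : ℝ) (θ : ℕ → ℝ) : ℝ :=
  ∑ k ∈ Icc 1 j, ∏ l ∈ Icc 1 k, α (l - 1) / (if l = j then γ + μ j else α l + μ l + θ l)

theorem Finset.sum_Icc_prod_Icc_lt_sum_Icc_prod_Icc {R : Type*} [CommSemiring R]
    [PartialOrder R] [IsStrictOrderedRing R] {n : ℕ} {a b : ℕ → R}
    (ha : ∀ l ∈ Icc 1 n, 0 < a l) (hab : ∀ l ∈ Icc 1 n, a l ≤ b l)
    (hlt : ∃ i ∈ Icc 1 n, a i < b i) :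
    ∑ k ∈ Icc 1 n, ∏ l ∈ Icc 1 k, a l < ∑ k ∈ Icc 1 n, ∏ l ∈ Icc 1 k, b l := by
  have hsub : ∀ k ∈ Icc 1 n, Icc 1 k ⊆ Icc 1 n := fun k hk =>
    Icc_subset_Icc le_rfl (mem_Icc.1 hk).2
  have hn : n ∈ Icc 1 n := by
    obtain ⟨i, hi, -⟩ := hlt
    exact mem_Icc.2 ⟨(mem_Icc.1 hi).1.trans (mem_Icc.1 hi).2, le_rfl⟩
  refine sum_lt_sum (fun k hk => ?_) ⟨n, hn, prod_lt_prod ha hab hlt⟩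
  exact prod_le_prod (fun l hl => (ha l (hsub k hk hl)).le) fun l hl => hab l (hsub k hk hl)

namespace Gθ

variable {j : ℕ} {α μ : ℕ → ℝ} {γ : ℝ} {θ θ' : ℕ → ℝ} {l : ℕ}

variable (j α μ γ θ) in
noncomputable def denom (l : ℕ) : ℝ :=
  if l = j then γ + μ j else α l + μ l + θ l

theorem eq_sum_prod_div_denom :
    Gθ j α μ γ θ = ∑ k ∈ Icc 1 j, ∏ l ∈ Icc 1 k, α (l - 1) / denom j α μ γ θ l :=
  rfl

theorem alpha_sub_one_pos (hα0 : 0 < α 0) (hα : ∀ l, 1 ≤ l → l ≤ j - 1 → 0 < α l)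
    (hl : l ∈ Icc 1 j) : 0 < α (l - 1) := by
  obtain ⟨hl1, hlj⟩ := mem_Icc.1 hl
  rcases hl1.eq_or_lt with rfl | hl1
  · exact hα0
  · exact hα _ (by omega) (by omega)

theorem denom_pos (hα : ∀ l, 1 ≤ l → l ≤ j - 1 → 0 < α l)
    (hμ : ∀ l, 1 ≤ l → l ≤ j → 0 < μ l) (hγ : 0 < γ)
    (hθ : ∀ i ∈ Icc 1 (j - 1), 0 ≤ θ i) (hl : l ∈ Icc 1 j) : 0 < denom j α μ γ θ l := by
  obtain ⟨hl1, hlj⟩ := mem_Icc.1 hl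
  unfold denom
  split_ifs with h
  · linarith [hμ j (by omega) le_rfl]
  · have hl' : l ≤ j - 1 := by omega
    linarith [hα l hl1 hl', hμ l hl1 hlj, hθ l (mem_Icc.2 ⟨hl1, hl'⟩)]

theorem denom_le_denom (hle : ∀ i ∈ Icc 1 (j - 1), θ i ≤ θ' i) (hl : l ∈ Icc 1 j) :
    denom j α μ γ θ l ≤ denom j α μ γ θ' l := by
  obtain ⟨hl1, hlj⟩ := mem_Icc.1 hl
  unfold denom
  split_ifs with h
  · exact le_rfl
  · linarith [hle l (mem_Icc.2 ⟨hl1, by omega⟩)]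

theorem denom_lt_denom (hl : l ∈ Icc 1 (j - 1)) (hlt : θ l < θ' l) :
    denom j α μ γ θ l < denom j α μ γ θ' l := by
  have hlj : l ≠ j := by grind
  simp only [denom, hlj, if_false]
  linarith

theorem nonneg (hα0 : 0 < α 0) (hα : ∀ l, 1 ≤ l → l ≤ j - 1 → 0 < α l)
    (hμ : ∀ l, 1 ≤ l → l ≤ j → 0 < μ l) (hγ : 0 < γ)
    (hθ : ∀ i ∈ Icc 1 (j - 1), 0 ≤ θ i) : 0 ≤ Gθ j α μ γ θ := by
  have hsub : ∀ k ∈ Icc 1 j, Icc 1 k ⊆ Icc 1 j := fun k hk =>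
    Icc_subset_Icc le_rfl (mem_Icc.1 hk).2
  rw [eq_sum_prod_div_denom]
  refine sum_nonneg fun k hk => prod_nonneg fun l hl => ?_
  exact (div_pos (alpha_sub_one_pos hα0 hα (hsub k hk hl))
    (denom_pos hα hμ hγ hθ (hsub k hk hl))).le

theorem lt_of_le_of_exists_lt (hα0 : 0 < α 0) (hα : ∀ l, 1 ≤ l → l ≤ j - 1 → 0 < α l)
    (hμ : ∀ l, 1 ≤ l → l ≤ j → 0 < μ l) (hγ : 0 < γ)
    (hθ : ∀ i ∈ Icc 1 (j - 1), 0 ≤ θ i)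
    (hle : ∀ i ∈ Icc 1 (j - 1), θ i ≤ θ' i)
    (hlt : ∃ i ∈ Icc 1 (j - 1), θ i < θ' i) :
    Gθ j α μ γ θ' < Gθ j α μ γ θ := by
  have hθ' : ∀ i ∈ Icc 1 (j - 1), 0 ≤ θ' i := fun i hi => (hθ i hi).trans (hle i hi)
  have hIcc : Icc 1 (j - 1) ⊆ Icc 1 j := Icc_subset_Icc le_rfl (Nat.sub_le j 1)
  rw [eq_sum_prod_div_denom, eq_sum_prod_div_denom]
  refine sum_Icc_prod_Icc_lt_sum_Icc_prod_Icc
    (fun l hl => div_pos (alpha_sub_one_pos hα0 hα hl) (denom_pos hα hμ hγ hθ' hl))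
    (fun l hl => div_le_div_of_nonneg_left (alpha_sub_one_pos hα0 hα hl).le
      (denom_pos hα hμ hγ hθ hl) (denom_le_denom hle hl)) ?_
  obtain ⟨i, hi, hθi⟩ := hlt
  exact ⟨i, hIcc hi, div_lt_div_of_pos_left (alpha_sub_one_pos hα0 hα (hIcc hi))
    (denom_pos hα hμ hγ hθ (hIcc hi)) (denom_lt_denom hi hθi)⟩

end Gθ

theorem stmt17_general (j : ℕ) (α μ : ℕ → ℝ) (γ : ℝ)
    (hα0 : α 0 = 1)
    (hα : ∀ l, 1 ≤ l → l ≤ j - 1 → 0 < α l)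
    (hμ : ∀ l, 1 ≤ l → l ≤ j → 0 < μ l) (hγ : 0 < γ)
    (f c cv Sb Sbv μt : ℝ) (hf : 0 < f) (hc : 0 < c) (hcv : 0 < cv)
    (hSb : 0 < Sb) (hSbv : 0 < Sbv) (hμt : 0 < μt)
    (θ θ' : ℕ → ℝ)
    (hθ : ∀ i ∈ Icc 1 (j - 1), 0 ≤ θ i)
    (hle : ∀ i ∈ Icc 1 (j - 1), θ i ≤ θ' i)
    (hlt : ∃ i ∈ Icc 1 (j - 1), θ i < θ' i) :
    Gθ j α μ γ θ' < Gθ j α μ γ θ ∧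
      f * Real.sqrt (c * cv * Sbv / (μt * Sb) * Gθ j α μ γ θ') <
        f * Real.sqrt (c * cv * Sbv / (μt * Sb) * Gθ j α μ γ θ) := by
  have hα0 : 0 < α 0 := hα0 ▸ one_pos
  have hG := Gθ.lt_of_le_of_exists_lt hα0 hα hμ hγ hθ hle hlt
  have hG' : 0 ≤ Gθ j α μ γ θ' :=
    Gθ.nonneg hα0 hα hμ hγ fun i hi => (hθ i hi).trans (hle i hi)
  have hC : 0 < c * cv * Sbv / (μt * Sb) := by positivity
  exact ⟨hG, mul_lt_mul_of_pos_left
    (Real.sqrt_lt_sqrt (mul_nonneg hC.le hG') (mul_lt_mul_of_pos_left hG hC)) hf⟩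

/-- If `θ ≤ θ'` componentwise with a strict inequality in some
coordinate, then `G(θ') < G(θ)`; consequently `R_0 = f·√((c·c_v·S̄_v/(μ̃·S̄))·G(θ))`
strictly decreases when any removal (treatment) rate is increased. -/
theorem stmt17 (j : ℕ) (hj : 2 ≤ j) (α μ : ℕ → ℝ) (γ : ℝ)
    (hα0 : α 0 = 1)
    (hα : ∀ l, 1 ≤ l → l ≤ j - 1 → 0 < α l)
    (hμ : ∀ l, 1 ≤ l → l ≤ j → 0 < μ l) (hγ : 0 < γ)
    (f c cv Sb Sbv μt : ℝ) (hf : 0 < f) (hc : 0 < c) (hcv : 0 < cv)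
    (hSb : 0 < Sb) (hSbv : 0 < Sbv) (hμt : 0 < μt)
    (θ θ' : ℕ → ℝ)
    (hθ : ∀ i ∈ Icc 1 (j - 1), 0 ≤ θ i)
    (hθ' : ∀ i ∈ Icc 1 (j - 1), 0 ≤ θ' i)
    (hle : ∀ i ∈ Icc 1 (j - 1), θ i ≤ θ' i)
    (hlt : ∃ i ∈ Icc 1 (j - 1), θ i < θ' i) :
    Gθ j α μ γ θ' < Gθ j α μ γ θ ∧
      f * Real.sqrt (c * cv * Sbv / (μt * Sb) * Gθ j α μ γ θ') <
        f * Real.sqrt (c * cv * Sbv / (μt * Sb) * Gθ j α μ γ θ) :=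
  stmt17_general j α μ γ hα0 hα hμ hγ f c cv Sb Sbv μt hf hc hcv hSb hSbv hμt θ θ' hθ hle hlt
end
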